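/- arXiv:1804.03590 — 6 statements merged into one kernel-verified Lean document; each statement's English description precedes it below -/
import Mathlib

section
/- Let Z be a set of nine points in the complex projective plane such that every line meeting Z in at least two points contains exactly three points of Z. Then Z admits exactly twelve 3-rich lines, i.e., exactly twelve lines containing exactly three points of Z. -/
/-!
Two distinct points of `P2` lie on exactly one line. Hence each of the `9 * 8` ordered pairs
of distinct points of `Z` spans a unique line, which is 3-rich by hypothesis, while a 3-rich
line accounts for `3 * 2` such pairs: there are `72 / 6 = 12` of them.
-/

open MvPolynomial

noncomputable section

abbrev P2 := Projectivization ℂ (Fin 3 → ℂ)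

/-- A projective line in `P2`, given as the zero set of a nonzero linear form. -/
def IsLine (S : Set P2) : Prop :=
  ∃ f : (Fin 3 → ℂ) →ₗ[ℂ] ℂ, f ≠ 0 ∧ S = {p : P2 | f p.rep = 0}

/-- Three points of `P2` are collinear if some line contains all of them. -/
def Collinear3 (p q r : P2) : Prop :=
  ∃ S : Set P2, IsLine S ∧ p ∈ S ∧ q ∈ S ∧ r ∈ S

/-- A point of `P2` from homogeneous coordinates. -/
def pt (v : Fin 3 → ℂ) (h : v ≠ 0) : P2 := Projectivization.mk ℂ v h

/-- Two sets of points of `P2` are projectively equivalent if a linear automorphism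
of `ℂ³` carries one onto the other. -/
def ProjEquiv (A B : Set P2) : Prop :=
  ∃ g : (Fin 3 → ℂ) ≃ₗ[ℂ] (Fin 3 → ℂ),
    B = Projectivization.map (g : (Fin 3 → ℂ) →ₗ[ℂ] (Fin 3 → ℂ)) g.injective '' A

section LinearSpace

variable {α : Type*} {L : Set (Set α)} {Z : Set α}

lemma finite_setOf_two_le_ncard_inter (hL : ∀ p q, p ≠ q → ∃! S, S ∈ L ∧ p ∈ S ∧ q ∈ S)
    (hZ : Z.Finite) : {S ∈ L | 2 ≤ (Z ∩ S).ncard}.Finite := by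
  refine Set.Finite.of_finite_image (f := (Z ∩ ·)) (hZ.finite_subsets.subset ?_) ?_
  · rintro _ ⟨S, -, rfl⟩
    exact Set.inter_subset_left
  · rintro S ⟨hS, hS2⟩ T ⟨hT, -⟩ (hST : Z ∩ S = Z ∩ T)
    obtain ⟨p, q, hp, hq, hpq⟩ := (Set.one_lt_ncard_iff (hZ.inter_of_left S)).mp hS2
    have hpT : p ∈ Z ∩ T := hST ▸ hp
    have hqT : q ∈ Z ∩ T := hST ▸ hq
    exact (hL p q hpq).unique ⟨hS, hp.2, hq.2⟩ ⟨hT, hpT.2, hqT.2⟩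

open Finset in
theorem ncard_setOf_ncard_inter_eq_mul_eq (hL : ∀ p q, p ≠ q → ∃! S, S ∈ L ∧ p ∈ S ∧ q ∈ S)
    (hZ : Z.Finite) {k : ℕ} (hk : 2 ≤ k)
    (hrich : ∀ S ∈ L, 2 ≤ (Z ∩ S).ncard → (Z ∩ S).ncard = k) :
    {S ∈ L | (Z ∩ S).ncard = k}.ncard * (k * (k - 1)) = Z.ncard * (Z.ncard - 1) := by
  classical
  set R := {S ∈ L | (Z ∩ S).ncard = k}
  have hR : R.Finite := (finite_setOf_two_le_ncard_inter hL hZ).subset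
    fun S ⟨hS, hSk⟩ ↦ ⟨hS, hSk ▸ hk⟩
  have key := card_mul_eq_card_mul (s := hZ.toFinset.offDiag) (t := hR.toFinset)
    (fun a S ↦ a.1 ∈ S ∧ a.2 ∈ S) (m := 1) (n := k * (k - 1)) ?_ ?_
  · rw [offDiag_card, mul_one, ← Nat.mul_sub_one, ← Set.ncard_eq_toFinset_card Z hZ,
      ← Set.ncard_eq_toFinset_card R hR] at key
    exact key.symm
  · rintro ⟨p, q⟩ hpq
    rw [mem_offDiag, Set.Finite.mem_toFinset, Set.Finite.mem_toFinset] at hpq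
    obtain ⟨hp, hq, hne⟩ := hpq
    obtain ⟨S, ⟨hS, hpS, hqS⟩, huniq⟩ := hL p q hne
    have h2 : 2 ≤ (Z ∩ S).ncard := by
      rw [← Set.ncard_pair hne]
      exact Set.ncard_le_ncard (Set.pair_subset ⟨hp, hpS⟩ ⟨hq, hqS⟩) (hZ.inter_of_left S)
    refine card_eq_one.mpr ⟨S, eq_singleton_iff_unique_mem.mpr ⟨?_, ?_⟩⟩
    · simpa [R, hS, hpS, hqS] using hrich S hS h2
    · intro T hT
      simp only [mem_bipartiteAbove, Set.Finite.mem_toFinset, R] at hT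
      exact huniq T ⟨hT.1.1, hT.2⟩
  · intro S hS
    have hZS := hZ.inter_of_left S
    have hbelow : hZ.toFinset.offDiag.bipartiteBelow (fun a S ↦ a.1 ∈ S ∧ a.2 ∈ S) S =
        hZS.toFinset.offDiag := by
      ext a
      simp only [mem_bipartiteBelow, mem_offDiag, Set.Finite.mem_toFinset, Set.mem_inter_iff]
      tauto
    rw [Set.Finite.mem_toFinset] at hS
    rw [hbelow, offDiag_card, ← Nat.mul_sub_one, ← Set.ncard_eq_toFinset_card _ hZS, hS.2]

end LinearSpace

open Module Submodule

lemma finrank_span_rep_pair {K V : Type*} [Field K] [AddCommGroup V] [Module K V]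
    {p q : Projectivization K V} (hpq : p ≠ q) : finrank K (span K (Set.range ![p.rep, q.rep])) = 2 := by
  rw [finrank_span_eq_card (Projectivization.linearIndependent_pair_iff_ne.mpr hpq),
    Fintype.card_fin]

lemma span_rep_pair_eq_ker {p q : P2} (hpq : p ≠ q) {f : (Fin 3 → ℂ) →ₗ[ℂ] ℂ} (hf : f ≠ 0)
    (hle : span ℂ (Set.range ![p.rep, q.rep]) ≤ LinearMap.ker f) :
    span ℂ (Set.range ![p.rep, q.rep]) = LinearMap.ker f := by
  refine eq_of_le_of_finrank_le hle ?_
  have := Dual.finrank_ker_add_one_of_ne_zero hf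
  rw [finrank_fin_fun] at this
  rw [finrank_span_rep_pair hpq]
  omega

lemma isLine_and_mem_iff {p q : P2} (hpq : p ≠ q) {S : Set P2} :
    (IsLine S ∧ p ∈ S ∧ q ∈ S) ↔ S = {x | x.rep ∈ span ℂ (Set.range ![p.rep, q.rep])} := by
  constructor
  · rintro ⟨⟨f, hf, rfl⟩, hp, hq⟩
    have hle : span ℂ (Set.range ![p.rep, q.rep]) ≤ LinearMap.ker f := by
      rw [span_le, Matrix.range_cons_cons_empty]
      exact Set.pair_subset hp hq
    rw [span_rep_pair_eq_ker hpq hf hle]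
    rfl
  · rintro rfl
    have hlt : span ℂ (Set.range ![p.rep, q.rep]) < ⊤ := by
      apply lt_top_of_finrank_lt_finrank
      rw [finrank_span_rep_pair hpq, finrank_fin_fun]
      norm_num
    obtain ⟨f, hf, hle⟩ := exists_le_ker_of_lt_top _ hlt
    refine ⟨⟨f, hf, ?_⟩, subset_span ⟨0, rfl⟩, subset_span ⟨1, rfl⟩⟩
    rw [span_rep_pair_eq_ker hpq hf hle]
    rfl

lemma existsUnique_isLine_mem {p q : P2} (hpq : p ≠ q) :
    ∃! S : Set P2, IsLine S ∧ p ∈ S ∧ q ∈ S :=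
  ⟨_, (isLine_and_mem_iff hpq).mpr rfl, fun _ hS ↦ (isLine_and_mem_iff hpq).mp hS⟩

/-- A 9-point set, all of whose connecting lines are 3-rich, admits exactly
twelve 3-rich lines. -/
theorem stmt1 (Z : Set P2) (hfin : Z.Finite) (hcard : Z.ncard = 9)
    (h3 : ∀ S : Set P2, IsLine S → 2 ≤ (Z ∩ S).ncard → (Z ∩ S).ncard = 3) :
    {S : Set P2 | IsLine S ∧ (Z ∩ S).ncard = 3}.ncard = 12 := by
  have key : {S : Set P2 | IsLine S ∧ (Z ∩ S).ncard = 3}.ncard * (3 * (3 - 1)) = 9 * (9 - 1) :=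
    hcard ▸ ncard_setOf_ncard_inter_eq_mul_eq (L := {S | IsLine S})
      (fun _ _ ↦ existsUnique_isLine_mem) hfin (by norm_num) h3
  omega
end
end

section
/- Let Z be a set of nine points in the complex projective plane such that every line meeting Z in at least two points contains exactly three points of Z. Then for every 3-rich line M, there exist two other distinct 3-rich lines M' and M'' such that M ∩ M' is not a point of Z and M ∩ M'' is not a point of Z. -/
open MvPolynomial

noncomputable section

/-!
A point `z` of `Z` off `M` is joined to the three points of `Z ∩ M` by three 3-rich lines,
which share `z` and so cover at most seven points of `Z`. The line from `z` to a point `w` of `Z`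
outside them is 3-rich and misses `Z ∩ M`: through `z` and a point of `Z ∩ M` there is only one
line, and it does not contain `w`. Applying this to some `z₁ ∉ M`, and then to some `z₂` off
`M ∪ M'` (these two lines hold at most six points of `Z`), gives `M'` and `M''`.
-/

open Module
open scoped LinearAlgebra.Projectivization

theorem Submodule.rep_mem_projectivization_iff {K V : Type*} [DivisionRing K] [AddCommGroup V]
    [Module K V] (s : Submodule K V) (x : ℙ K V) : x ∈ s.projectivization ↔ x.rep ∈ s := by
  conv_lhs => rw [← x.mk_rep]
  rfl

theorem Module.Dual.ker_eq_ker_of_apply_rep_eq_zero {K V : Type*} [Field K] [AddCommGroup V]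
    [Module K V] [FiniteDimensional K V] (hV : finrank K V = 3) {f g : Dual K V}
    (hf : f ≠ 0) (hg : g ≠ 0) {p q : ℙ K V} (hpq : p ≠ q)
    (hfp : f p.rep = 0) (hfq : f q.rep = 0) (hgp : g p.rep = 0) (hgq : g q.rep = 0) :
    LinearMap.ker f = LinearMap.ker g := by
  have hf2 : finrank K (LinearMap.ker f) = 2 := by
    have := f.finrank_ker_add_one_of_ne_zero hf; omega
  have hg2 : finrank K (LinearMap.ker g) = 2 := by
    have := g.finrank_ker_add_one_of_ne_zero hg; omega
  simp only [← LinearMap.mem_ker, ← Submodule.rep_mem_projectivization_iff] at hfp hfq hgp hgq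
  exact Projectivization.line_unique hpq _ _ hf2 hg2 hfp hfq hgp hgq

theorem IsLine.eq_of_mem {p q : P2} (hpq : p ≠ q) {S T : Set P2} (hS : IsLine S) (hT : IsLine T)
    (hpS : p ∈ S) (hqS : q ∈ S) (hpT : p ∈ T) (hqT : q ∈ T) : S = T := by
  obtain ⟨f, hf, rfl⟩ := hS
  obtain ⟨g, hg, rfl⟩ := hT
  have hker := Dual.ker_eq_ker_of_apply_rep_eq_zero (by simp) hf hg hpq hpS hqS hpT hqT
  ext x
  simp only [Set.mem_ofPred_eq, ← LinearMap.mem_ker, hker]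

theorem exists_isLine_mem_mem (p q : P2) : ∃ S : Set P2, IsLine S ∧ p ∈ S ∧ q ∈ S := by
  have hlt : Submodule.span ℂ {p.rep, q.rep} < ⊤ := by
    refine Submodule.lt_top_of_finrank_lt_finrank ?_
    calc finrank ℂ (Submodule.span ℂ ({p.rep, q.rep} : Set (Fin 3 → ℂ)))
        ≤ 2 := (finrank_span_le_card _).trans (by simpa using Finset.card_le_two)
      _ < finrank ℂ (Fin 3 → ℂ) := by simp
  obtain ⟨f, hf, hle⟩ := Submodule.exists_le_ker_of_lt_top _ hlt
  exact ⟨_, ⟨f, hf, rfl⟩, hle (Submodule.subset_span (by simp)),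
    hle (Submodule.subset_span (by simp))⟩

theorem Set.ncard_union_union_add_two_le {α : Type*} {A B C : Set α} (hA : A.Finite)
    (hB : B.Finite) (hC : C.Finite) {z : α} (hzA : z ∈ A) (hzB : z ∈ B) (hzC : z ∈ C) :
    (A ∪ B ∪ C).ncard + 2 ≤ A.ncard + B.ncard + C.ncard := by
  have hAB := Set.ncard_union_add_ncard_inter A B hA hB
  have hABC := Set.ncard_union_add_ncard_inter (A ∪ B) C (hA.union hB) hC
  have h1 : 0 < (A ∩ B).ncard := (Set.ncard_pos (hA.inter_of_left B)).2 ⟨z, hzA, hzB⟩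
  have h2 : 0 < ((A ∪ B) ∩ C).ncard :=
    (Set.ncard_pos ((hA.union hB).inter_of_left C)).2 ⟨z, Or.inl hzA, hzC⟩
  omega

section RichLines

variable (Z : Set P2) (hfin : Z.Finite)
  (h3 : ∀ S : Set P2, IsLine S → 2 ≤ (Z ∩ S).ncard → (Z ∩ S).ncard = 3)
include hfin h3

theorem exists_rich_line_through {a b : P2} (ha : a ∈ Z) (hb : b ∈ Z) (hab : a ≠ b) :
    ∃ L, IsLine L ∧ (Z ∩ L).ncard = 3 ∧ a ∈ L ∧ b ∈ L := by
  obtain ⟨L, hL, haL, hbL⟩ := exists_isLine_mem_mem a b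
  refine ⟨L, hL, h3 L hL ?_, haL, hbL⟩
  calc 2 = ({a, b} : Set P2).ncard := (Set.ncard_pair hab).symm
    _ ≤ (Z ∩ L).ncard :=
      Set.ncard_le_ncard (Set.insert_subset ⟨ha, haL⟩ (by simpa using ⟨hb, hbL⟩))
        (hfin.inter_of_left L)

theorem exists_rich_line_disjoint (hcard : 7 < Z.ncard) {M : Set P2} (hM3 : (Z ∩ M).ncard = 3)
    {z : P2} (hz : z ∈ Z) (hzM : z ∉ M) :
    ∃ L, IsLine L ∧ (Z ∩ L).ncard = 3 ∧ z ∈ L ∧ Z ∩ (M ∩ L) = ∅ := by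
  obtain ⟨p₁, p₂, p₃, -, -, -, hZM⟩ := Set.ncard_eq_three.mp hM3
  have hne : ∀ p ∈ Z ∩ M, z ≠ p := fun p hp h => hzM (h ▸ hp.2)
  choose! L hL hL3 hzL hpL using fun p (hp : p ∈ Z ∩ M) =>
    exists_rich_line_through Z hfin h3 hz hp.1 (hne p hp)
  have h₁ : p₁ ∈ Z ∩ M := by simp [hZM]
  have h₂ : p₂ ∈ Z ∩ M := by simp [hZM]
  have h₃ : p₃ ∈ Z ∩ M := by simp [hZM]
  obtain ⟨w, hwZ, hwL⟩ : ∃ w ∈ Z, w ∉ Z ∩ L p₁ ∪ Z ∩ L p₂ ∪ Z ∩ L p₃ := by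
    refine Set.exists_mem_notMem_of_ncard_lt_ncard ?_ (by simp [hfin.inter_of_left])
    have := Set.ncard_union_union_add_two_le (hfin.inter_of_left (L p₁))
      (hfin.inter_of_left (L p₂)) (hfin.inter_of_left (L p₃))
      ⟨hz, hzL p₁ h₁⟩ ⟨hz, hzL p₂ h₂⟩ ⟨hz, hzL p₃ h₃⟩
    rw [hL3 p₁ h₁, hL3 p₂ h₂, hL3 p₃ h₃] at this
    omega
  have hzw : z ≠ w := by
    rintro rfl
    exact hwL (Or.inl (Or.inl ⟨hz, hzL p₁ h₁⟩))
  obtain ⟨N, hN, hN3, hzN, hwN⟩ := exists_rich_line_through Z hfin h3 hz hwZ hzw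
  refine ⟨N, hN, hN3, hzN, Set.eq_empty_of_forall_notMem ?_⟩
  rintro x ⟨hxZ, hxM, hxN⟩
  have hx : x ∈ Z ∩ M := ⟨hxZ, hxM⟩
  have hNx : N = L x := IsLine.eq_of_mem (hne x hx) hN (hL x hx) hzN hxN (hzL x hx) (hpL x hx)
  have hwLx : w ∈ Z ∩ L x := ⟨hwZ, hNx ▸ hwN⟩
  have hx₁₂₃ : x ∈ ({p₁, p₂, p₃} : Set P2) := hZM ▸ hx
  exact hwL (by rcases hx₁₂₃ with rfl | rfl | rfl <;> simp [hwLx])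

end RichLines

/-- For every 3-rich line `M` of a 9-point set all of whose connecting lines are
3-rich, there are two other distinct 3-rich lines meeting `M` outside of `Z`. -/
theorem stmt2 (Z : Set P2) (hfin : Z.Finite) (hcard : Z.ncard = 9)
    (h3 : ∀ S : Set P2, IsLine S → 2 ≤ (Z ∩ S).ncard → (Z ∩ S).ncard = 3) :
    ∀ M : Set P2, IsLine M → (Z ∩ M).ncard = 3 →
      ∃ M' M'' : Set P2, IsLine M' ∧ (Z ∩ M').ncard = 3 ∧
        IsLine M'' ∧ (Z ∩ M'').ncard = 3 ∧
        M' ≠ M ∧ M'' ≠ M ∧ M' ≠ M'' ∧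
        Z ∩ (M ∩ M') = ∅ ∧ Z ∩ (M ∩ M'') = ∅ := by
  rintro M - hM3
  obtain ⟨z₁, hz₁, hz₁M⟩ : ∃ z ∈ Z, z ∉ Z ∩ M :=
    Set.exists_mem_notMem_of_ncard_lt_ncard (by omega) (hfin.inter_of_left M)
  obtain ⟨M', hM', hM'3, hz₁M', hMM'⟩ :=
    exists_rich_line_disjoint Z hfin h3 (by omega) hM3 hz₁ (fun h => hz₁M ⟨hz₁, h⟩)
  obtain ⟨z₂, hz₂, hz₂MM'⟩ : ∃ z ∈ Z, z ∉ Z ∩ M ∪ Z ∩ M' :=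
    Set.exists_mem_notMem_of_ncard_lt_ncard ((Set.ncard_union_le _ _).trans_lt (by omega))
      ((hfin.inter_of_left M).union (hfin.inter_of_left M'))
  obtain ⟨M'', hM'', hM''3, hz₂M'', hMM''⟩ :=
    exists_rich_line_disjoint Z hfin h3 (by omega) hM3 hz₂ (fun h => hz₂MM' (Or.inl ⟨hz₂, h⟩))
  refine ⟨M', M'', hM', hM'3, hM'', hM''3, ?_, ?_, ?_, hMM', hMM''⟩
  · rintro rfl; exact hz₁M ⟨hz₁, hz₁M'⟩
  · rintro rfl; exact hz₂MM' (Or.inl ⟨hz₂, hz₂M''⟩)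
  · rintro rfl; exact hz₂MM' (Or.inr ⟨hz₂, hz₂M''⟩)
end
end

section
/- Up to projective equivalence, the dual Fermat configuration F_3 is the only configuration of nine points in the complex projective plane with no k-rich lines for every k ≥ 4 and no simple lines, i.e., such that every line meeting the configuration in at least two points contains exactly three of its points. -/
open MvPolynomial

noncomputable section

/-- The dual Fermat configuration `F₃`: the nine points
`[1, -ω^a, 0]`, `[1, 0, -ω^a]`, `[0, 1, -ω^a]` for `a = 0, 1, 2`. -/
def F3 (ω : ℂ) : Set P2 :=
  ⋃ a : Fin 3,
    ({pt ![1, -ω ^ (a : ℕ), 0] (by intro h; simpa using congrFun h 0),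
      pt ![1, 0, -ω ^ (a : ℕ)] (by intro h; simpa using congrFun h 0),
      pt ![0, 1, -ω ^ (a : ℕ)] (by intro h; simpa using congrFun h 1)} : Set P2)

/-!
Through two points of `Z` passes a line meeting `Z` in exactly one further point. This "third
point" operation makes `Z` a Steiner triple system on nine points, and every such system is the
affine plane over `ZMod 3`. Four of its points in general position can be moved to the standard
projective frame; the collinearities of the affine plane then force the nine points into the normal
form `hesse c` with `c ^ 2 - c + 1 = 0`, that is `c = -θ ^ 2` for a primitive cube root of unity
`θ`, and an explicit linear map carries `hesse (-θ ^ 2)` onto `F3 θ = F3 ω`.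
-/

open Projectivization Matrix

local notation "ℂ³" => Fin 3 → ℂ

-- `ZMod 3` is definitionally `Fin 3`.
def vec3 {β : Type*} (a b c : β) : ZMod 3 → β := ![a, b, c]

@[simp] theorem vec3_zero {β : Type*} (a b c : β) : vec3 a b c 0 = a := rfl

@[simp] theorem vec3_one {β : Type*} (a b c : β) : vec3 a b c 1 = b := rfl

@[simp] theorem vec3_two {β : Type*} (a b c : β) : vec3 a b c 2 = c := rfl

theorem ZMod.three_cases (a : ZMod 3) : a = 0 ∨ a = 1 ∨ a = 2 := by
  revert a; decide

theorem ZMod.exists_three {p : ZMod 3 → Prop} : (∃ a, p a) ↔ p 0 ∨ p 1 ∨ p 2 := by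
  refine ⟨fun ⟨a, ha⟩ => ?_, fun h => ?_⟩
  · rcases a.three_cases with rfl | rfl | rfl <;> tauto
  · rcases h with h | h | h <;> exact ⟨_, h⟩

theorem List.exists_notMem_of_length_lt_natCard {α : Type*} [Finite α] (l : List α)
    (h : l.length < Nat.card α) : ∃ x, x ∉ l := by
  classical
  have := Fintype.ofFinite α
  by_contra! hl
  have := Finset.card_le_card (fun x _ => List.mem_toFinset.2 (hl x) : Finset.univ ⊆ l.toFinset)
  have := l.toFinset_card_le
  simp_all [Nat.card_eq_fintype_card]
  omega

theorem List.Nodup.mem_of_length_eq_natCard {α : Type*} [Finite α] {l : List α} (hl : l.Nodup)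
    (h : l.length = Nat.card α) (x : α) : x ∈ l := by
  classical
  have := Fintype.ofFinite α
  have := l.toFinset.eq_univ_of_card
    (by rw [List.toFinset_card_of_nodup hl, h, Nat.card_eq_fintype_card])
  rw [← List.mem_toFinset, this]
  exact Finset.mem_univ x

-- A Steiner triple system, encoded by the map sending two distinct points to the third point of
-- their block.
structure IsSteinerQuasigroup {α : Type*} (t : α → α → α) : Prop where
  idem : ∀ x, t x x = x
  comm : ∀ x y, t x y = t y x
  cancel : ∀ x y, t x (t x y) = y

namespace IsSteinerQuasigroup

variable {α : Type*} {t : α → α → α}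

theorem line (ht : IsSteinerQuasigroup t) {a b c : α} (h : t a b = c) :
    t a b = c ∧ t b a = c ∧ t a c = b ∧ t c a = b ∧ t b c = a ∧ t c b = a := by
  subst h
  refine ⟨rfl, ht.comm _ _, ht.cancel _ _, ?_, ?_, ?_⟩
  · rw [ht.comm, ht.cancel]
  · rw [ht.comm a b, ht.cancel]
  · rw [ht.comm, ht.comm a b, ht.cancel]

-- Were the two sides equal, for the two points `X`, `t A X` outside the seven named ones also
-- `t D X = t A X`, whence `A = D`. In the Fano plane, of order 7, the two sides are equal.
theorem third_ne_of_card_eq_nine [Finite α] (ht : IsSteinerQuasigroup t) (hcard : Nat.card α = 9)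
    {A B D : α} (hB : B ≠ A) (hD : D ≠ A ∧ D ≠ B ∧ D ≠ t A B) : t A (t B D) ≠ t (t A B) D := by
  have hidem := ht.idem
  have hcomm := ht.comm
  have hcancel := ht.cancel
  set C := t A B
  set E := t A D
  set F := t B D
  set G := t C D
  intro hAFG
  obtain ⟨X, hX⟩ :=
    List.exists_notMem_of_length_lt_natCard [A, B, C, D, E, F, G] (by simp [hcard])
  simp only [List.mem_cons, List.not_mem_nil, or_false, not_or] at hX
  have hall := List.Nodup.mem_of_length_eq_natCard (l := [A, B, C, D, E, F, G, X, t A X])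
    (by simp only [List.nodup_cons, List.mem_cons, List.not_mem_nil, List.nodup_nil, not_or]
        and_intros <;> grind) (by simp [hcard])
  have hDX := hall (t D X)
  simp only [List.mem_cons, List.not_mem_nil, or_false] at hDX
  grind

theorem exists_labelling [Finite α] (ht : IsSteinerQuasigroup t) (hcard : Nat.card α = 9) :
    ∃ A B C D E F G H I : α, (∀ x, x ∈ [A, B, C, D, E, F, G, H, I]) ∧
      t A B = C ∧ t A D = E ∧ t B D = F ∧ t C D = G ∧ t A F = H ∧ t D H = I ∧
      t A G = I ∧ t B G = H ∧ t C H = E ∧ t B E = I ∧ t E F = G ∧ t C F = I := by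
  have hidem := ht.idem
  have hcomm := ht.comm
  have hcancel := ht.cancel
  obtain ⟨A, -⟩ := List.exists_notMem_of_length_lt_natCard ([] : List α) (by simp [hcard])
  obtain ⟨B, hB⟩ := List.exists_notMem_of_length_lt_natCard [A] (by simp [hcard])
  obtain ⟨D, hD⟩ := List.exists_notMem_of_length_lt_natCard [A, B, t A B] (by simp [hcard])
  simp only [List.mem_cons, List.not_mem_nil, or_false, not_or] at hB hD
  have hHG := ht.third_ne_of_card_eq_nine hcard hB hD
  set C := t A B
  set E := t A D
  set F := t B D
  set G := t C D
  set H := t A F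
  set I := t D H
  have hall := List.Nodup.mem_of_length_eq_natCard (l := [A, B, C, D, E, F, G, H, I])
    (by simp only [List.nodup_cons, List.mem_cons, List.not_mem_nil, List.nodup_nil, not_or]
        and_intros <;> grind) (by simp [hcard])
  simp only [List.mem_cons, List.not_mem_nil, or_false] at hall
  have hAG : t A G = I := by have := hall (t A G); grind
  have hBG : t B G = H := by
    -- If `t B G = E`, no point is left for `t B H`.
    have hBG : t B G = E ∨ t B G = H := by have := hall (t B G); grind
    have := hall (t B H); grind
  have hCH : t C H = E := by have := hall (t C H); grind
  have hBE : t B E = I := by have := hall (t B E); grind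
  have hEF : t E F = G := by have := hall (t E F); grind
  have hCF : t C F = I := by have := hall (t C F); grind
  exact ⟨A, B, C, D, E, F, G, H, I, by simpa using hall, rfl, rfl, rfl, rfl, rfl, rfl,
    hAG, hBG, hCH, hBE, hEF, hCF⟩

theorem exists_equiv_affinePlane [Finite α] (ht : IsSteinerQuasigroup t)
    (hcard : Nat.card α = 9) :
    ∃ e : ZMod 3 × ZMod 3 ≃ α, ∀ x y, t (e x) (e y) = e (-x - y) := by
  obtain ⟨A, B, C, D, E, F, G, H, I, hall, hAB, hAD, hBD, hCD, hAF, hDH, hAG, hBG, hCH, hBE, hEF,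
    hCF⟩ := ht.exists_labelling hcard
  let f : ZMod 3 × ZMod 3 → α := fun v => vec3 (vec3 A D E) (vec3 B H G) (vec3 C I F) v.1 v.2
  have hf : Function.Surjective f := by
    intro x
    simp only [List.mem_cons, List.not_mem_nil, or_false] at hall
    rcases hall x with rfl | rfl | rfl | rfl | rfl | rfl | rfl | rfl | rfl
    exacts [⟨(0, 0), rfl⟩, ⟨(1, 0), rfl⟩, ⟨(2, 0), rfl⟩, ⟨(0, 1), rfl⟩, ⟨(0, 2), rfl⟩,
      ⟨(2, 2), rfl⟩, ⟨(1, 2), rfl⟩, ⟨(1, 1), rfl⟩, ⟨(2, 1), rfl⟩]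
  have := Fintype.ofFinite α
  have hbij : Function.Bijective f :=
    (Fintype.bijective_iff_surjective_and_card f).2 ⟨hf, by simp [← Nat.card_eq_fintype_card, hcard]⟩
  refine ⟨Equiv.ofBijective f hbij, ?_⟩
  -- `simp` cannot evaluate `-a - b` at numerals of `ZMod 3`.
  have hsub : ∀ a b : ZMod 3, -a - b = vec3 (vec3 0 2 1) (vec3 2 1 0) (vec3 1 0 2) a b := by
    decide
  rintro ⟨a, b⟩ ⟨c, d⟩
  rcases a.three_cases with rfl | rfl | rfl <;> rcases b.three_cases with rfl | rfl | rfl <;>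
    rcases c.three_cases with rfl | rfl | rfl <;> rcases d.three_cases with rfl | rfl | rfl <;>
    simp only [f, Equiv.ofBijective_apply, Prod.neg_mk, Prod.mk_sub_mk, hsub, vec3_zero, vec3_one,
      vec3_two, ht.idem, ht.line hAB, ht.line hAD, ht.line hBD, ht.line hCD, ht.line hAF,
      ht.line hDH, ht.line hAG, ht.line hBG, ht.line hCH, ht.line hBE, ht.line hEF, ht.line hCF]

end IsSteinerQuasigroup

abbrev projMap (g : ℂ³ ≃ₗ[ℂ] ℂ³) : P2 → P2 := Projectivization.map (g : ℂ³ →ₗ[ℂ] ℂ³) g.injective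

@[simp] theorem projMap_mk (g : ℂ³ ≃ₗ[ℂ] ℂ³) {v : ℂ³} (hv : v ≠ 0) :
    projMap g (mk ℂ v hv) = mk ℂ (g v) (g.map_ne_zero_iff.2 hv) :=
  rfl

theorem projMap_trans (g h : ℂ³ ≃ₗ[ℂ] ℂ³) (p : P2) :
    projMap (g.trans h) p = projMap h (projMap g p) := by
  induction p using Projectivization.ind with | h v hv => rfl

@[simp] theorem projMap_symm_projMap (g : ℂ³ ≃ₗ[ℂ] ℂ³) (p : P2) : projMap g.symm (projMap g p) = p := by
  induction p using Projectivization.ind with | h v hv => simp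

@[simp] theorem projMap_projMap_symm (g : ℂ³ ≃ₗ[ℂ] ℂ³) (p : P2) : projMap g (projMap g.symm p) = p := by
  simpa using projMap_symm_projMap g.symm p

theorem linearForm_rep_mk_eq_zero_iff (f : ℂ³ →ₗ[ℂ] ℂ) {u : ℂ³} (hu : u ≠ 0) :
    f (mk ℂ u hu).rep = 0 ↔ f u = 0 := by
  obtain ⟨a, ha⟩ := exists_smul_eq_mk_rep ℂ u hu
  rw [← ha, Units.smul_def, map_smul, smul_eq_zero, or_iff_right a.ne_zero]

theorem collinear3_mk_iff {u v w : ℂ³} (hu : u ≠ 0) (hv : v ≠ 0) (hw : w ≠ 0) :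
    Collinear3 (mk ℂ u hu) (mk ℂ v hv) (mk ℂ w hw) ↔ (of ![u, v, w]).det = 0 := by
  rw [← exists_mulVec_eq_zero_iff]
  constructor
  · rintro ⟨_, ⟨f, hf, rfl⟩, hu', hv', hw'⟩
    obtain ⟨c, rfl⟩ := (dotProductEquiv ℂ (Fin 3)).surjective f
    rw [Set.mem_ofPred_eq, linearForm_rep_mk_eq_zero_iff, dotProductEquiv_apply_apply,
      dotProduct_comm] at hu' hv' hw'
    refine ⟨c, by simpa using hf, ?_⟩
    ext i
    fin_cases i
    exacts [hu', hv', hw']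
  · rintro ⟨c, hc, hM⟩
    refine ⟨_, ⟨dotProductEquiv ℂ (Fin 3) c, by simpa using hc, rfl⟩, ?_, ?_, ?_⟩ <;>
      refine (linearForm_rep_mk_eq_zero_iff _ _).2 ?_ <;>
      rw [dotProductEquiv_apply_apply, dotProduct_comm]
    exacts [congrFun hM 0, congrFun hM 1, congrFun hM 2]

theorem collinear3_mk_iff_not_linearIndependent {u v w : ℂ³} (hu : u ≠ 0) (hv : v ≠ 0)
    (hw : w ≠ 0) :
    Collinear3 (mk ℂ u hu) (mk ℂ v hv) (mk ℂ w hw) ↔ ¬LinearIndependent ℂ ![u, v, w] := by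
  rw [collinear3_mk_iff, ← not_iff_not, not_not, ← ne_eq, ← isUnit_iff_ne_zero,
    ← isUnit_iff_isUnit_det, ← linearIndependent_rows_iff_isUnit]
  rfl

theorem collinear3_iff_det (p q r : P2) :
    Collinear3 p q r ↔ (of ![p.rep, q.rep, r.rep]).det = 0 := by
  simpa only [mk_rep] using collinear3_mk_iff p.rep_nonzero q.rep_nonzero r.rep_nonzero

theorem collinear3_iff_not_linearIndependent (p q r : P2) :
    Collinear3 p q r ↔ ¬LinearIndependent ℂ ![p.rep, q.rep, r.rep] := by
  simpa only [mk_rep] using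
    collinear3_mk_iff_not_linearIndependent p.rep_nonzero q.rep_nonzero r.rep_nonzero

theorem not_linearIndependent_of_eq_add {u v w : ℂ³} {a b : ℂ} (h : w = a • u + b • v) :
    ¬LinearIndependent ℂ ![u, v, w] := by
  rw [Fintype.linearIndependent_iff]
  push Not
  exact ⟨![a, b, -1], by simp [Fin.sum_univ_three, h]; abel, 2, by simp⟩

theorem Collinear3.swap₁₂ {p q r : P2} (h : Collinear3 p q r) : Collinear3 q p r :=
  let ⟨S, hS, hp, hq, hr⟩ := h; ⟨S, hS, hq, hp, hr⟩

theorem Collinear3.swap₂₃ {p q r : P2} (h : Collinear3 p q r) : Collinear3 p r q :=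
  let ⟨S, hS, hp, hq, hr⟩ := h; ⟨S, hS, hp, hr, hq⟩

theorem collinear3_left (p q : P2) : Collinear3 p q p :=
  (collinear3_iff_det p q p).2 (det_zero_of_row_eq (i := 0) (j := 2) (by decide) rfl)

theorem isLine_setOf_collinear3 {p q : P2} (hpq : p ≠ q) : IsLine {x | Collinear3 p q x} := by
  refine ⟨dotProductEquiv ℂ (Fin 3) (p.rep ⨯₃ q.rep), ?_, ?_⟩
  · simpa [crossProduct_ne_zero_iff_linearIndependent] using linearIndependent_pair_iff_ne.2 hpq
  · ext x
    rw [Set.mem_ofPred_eq, Set.mem_ofPred_eq, collinear3_iff_det, dotProductEquiv_apply_apply,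
      dotProduct_comm, triple_product_permutation, triple_product_eq_det]
    rfl

theorem Collinear3.map {p q r : P2} (h : Collinear3 p q r) (g : ℂ³ ≃ₗ[ℂ] ℂ³) :
    Collinear3 (projMap g p) (projMap g q) (projMap g r) := by
  obtain ⟨_, ⟨f, hf, rfl⟩, hp, hq, hr⟩ := h
  have hmem : ∀ x : P2, f x.rep = 0 → (f ∘ₗ (g.symm : ℂ³ →ₗ[ℂ] ℂ³)) (projMap g x).rep = 0 := by
    intro x hx
    rw [← mk_rep x, projMap_mk, linearForm_rep_mk_eq_zero_iff]
    simpa using hx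
  refine ⟨_, ⟨f ∘ₗ (g.symm : ℂ³ →ₗ[ℂ] ℂ³), ?_, rfl⟩, hmem p hp, hmem q hq, hmem r hr⟩
  intro h0
  refine hf (LinearMap.ext fun x => ?_)
  simpa using LinearMap.congr_fun h0 (g x)

theorem collinear3_projMap_iff (g : ℂ³ ≃ₗ[ℂ] ℂ³) {p q r : P2} :
    Collinear3 (projMap g p) (projMap g q) (projMap g r) ↔ Collinear3 p q r :=
  ⟨fun h => by simpa using h.map g.symm, fun h => h.map g⟩

theorem mk_smul_rep {p : P2} {a : ℂ} (h : a • p.rep ≠ 0) : mk ℂ (a • p.rep) h = p := by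
  conv_rhs => rw [← mk_rep p]
  exact (mk_eq_mk_iff' ℂ _ _ h p.rep_nonzero).2 ⟨a, rfl⟩

theorem exists_eq_mk_add_smul {u v : ℂ³} (hu : u ≠ 0) (hv : v ≠ 0)
    (huv : mk ℂ u hu ≠ mk ℂ v hv) {p : P2} (hcol : Collinear3 (mk ℂ u hu) (mk ℂ v hv) p)
    (hpv : p ≠ mk ℂ v hv) : ∃ (s : ℂ) (h : u + s • v ≠ 0), p = mk ℂ (u + s • v) h := by
  have hli : LinearIndependent ℂ ![u, v] :=
    (independent_mk_iff_LinearIndependent hu hv).1 ((independent_pair_iff_ne _ _).2 huv)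
  have hspan : p.rep ∈ Submodule.span ℂ {u, v} := by
    rw [← mk_rep p, collinear3_mk_iff_not_linearIndependent] at hcol
    have hsnoc : ![u, v, p.rep] = Fin.snoc ![u, v] p.rep := by
      ext i : 1
      fin_cases i <;> rfl
    by_contra h
    rw [hsnoc, linearIndependent_finSnoc] at hcol
    exact hcol ⟨hli, by simpa [range_cons, Set.pair_comm u v] using h⟩
  obtain ⟨a, b, hab⟩ := Submodule.mem_span_pair.1 hspan
  have ha : a ≠ 0 := by
    rintro rfl
    refine hpv ?_
    rw [← mk_rep p, mk_eq_mk_iff']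
    exact ⟨b, by simpa using hab⟩
  have hne : u + (b / a) • v ≠ 0 := fun h =>
    one_ne_zero (LinearIndependent.pair_iff.1 hli 1 (b / a) (by simpa using h)).1
  refine ⟨b / a, hne, ?_⟩
  rw [← mk_rep p, mk_eq_mk_iff']
  exact ⟨a, by rw [← hab, smul_add, smul_smul, mul_div_cancel₀ _ ha]⟩

theorem exists_linearEquiv_frame {p₀ p₁ p₂ p₃ : P2} (h₀₁₂ : ¬Collinear3 p₀ p₁ p₂)
    (h₀₁₃ : ¬Collinear3 p₀ p₁ p₃) (h₀₂₃ : ¬Collinear3 p₀ p₂ p₃) (h₁₂₃ : ¬Collinear3 p₁ p₂ p₃) :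
    ∃ g : ℂ³ ≃ₗ[ℂ] ℂ³,
      projMap g (mk ℂ ![1, 0, 0] (by simp)) = p₀ ∧
      projMap g (mk ℂ ![0, 1, 0] (by simp)) = p₁ ∧
      projMap g (mk ℂ ![0, 0, 1] (by simp)) = p₂ ∧
      projMap g (mk ℂ ![1, 1, 1] (by simp)) = p₃ := by
  rw [collinear3_iff_not_linearIndependent, not_not] at h₀₁₂
  set b := basisOfLinearIndependentOfCardEqFinrank h₀₁₂ (by simp)
  set x : ℂ³ := ⇑(b.repr p₃.rep)
  have hx : p₃.rep = x 0 • p₀.rep + x 1 • p₁.rep + x 2 • p₂.rep := by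
    conv_lhs => rw [← b.sum_repr p₃.rep]
    simp [b, x, Fin.sum_univ_three]
  have hx₀ : x 0 ≠ 0 := fun h => h₁₂₃ <| (collinear3_iff_not_linearIndependent _ _ _).2 <|
    not_linearIndependent_of_eq_add (a := x 1) (b := x 2) (by rw [hx, h]; module)
  have hx₁ : x 1 ≠ 0 := fun h => h₀₂₃ <| (collinear3_iff_not_linearIndependent _ _ _).2 <|
    not_linearIndependent_of_eq_add (a := x 0) (b := x 2) (by rw [hx, h]; module)
  have hx₂ : x 2 ≠ 0 := fun h => h₀₁₃ <| (collinear3_iff_not_linearIndependent _ _ _).2 <|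
    not_linearIndependent_of_eq_add (a := x 0) (b := x 1) (by rw [hx, h]; module)
  let w : Fin 3 → ℂ³ := fun i => x i • ![p₀.rep, p₁.rep, p₂.rep] i
  have hw : LinearIndependent ℂ w := by
    have hx' : ∀ i, x i ≠ 0 := fun i => by fin_cases i <;> assumption
    exact h₀₁₂.units_smul fun i => Units.mk0 (x i) (hx' i)
  let g := LinearEquiv.ofInjectiveEndo _ hw.fintypeLinearCombination_injective
  have hg : ∀ y, g y = y 0 • w 0 + y 1 • w 1 + y 2 • w 2 := fun y => by
    simp [g, Fintype.linearCombination_apply, Fin.sum_univ_three]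
  refine ⟨g, ?_, ?_, ?_, ?_⟩ <;> simp only [map_mk, LinearEquiv.coe_coe, hg]
  · simpa [w] using mk_smul_rep _
  · simpa [w] using mk_smul_rep _
  · simpa [w] using mk_smul_rep _
  · simp [w, ← hx]

theorem exists_third_point {Z : Set P2} (hZ : Z.Finite)
    (h3 : ∀ S : Set P2, IsLine S → 2 ≤ (Z ∩ S).ncard → (Z ∩ S).ncard = 3) {p q : P2}
    (hp : p ∈ Z) (hq : q ∈ Z) (hpq : p ≠ q) :
    ∃ r ∈ Z, r ≠ p ∧ r ≠ q ∧ ∀ x ∈ Z, Collinear3 p q x ↔ x = p ∨ x = q ∨ x = r := by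
  set S := {x | Collinear3 p q x}
  have hpqS : {p, q} ⊆ Z ∩ S := by
    rintro x (rfl | rfl)
    exacts [⟨hp, collinear3_left x q⟩, ⟨hq, (collinear3_left x p).swap₁₂⟩]
  have hS3 : (Z ∩ S).ncard = 3 := h3 S (isLine_setOf_collinear3 hpq) <|
    (Set.ncard_pair hpq).symm.le.trans (Set.ncard_le_ncard hpqS (hZ.inter_of_left S))
  obtain ⟨r, hr⟩ : ∃ r, (Z ∩ S) \ {p, q} = {r} := Set.ncard_eq_one.1 <| by
    rw [Set.ncard_sdiff hpqS, hS3, Set.ncard_pair hpq]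
  have hrmem : r ∈ (Z ∩ S) \ {p, q} := hr ▸ rfl
  simp only [Set.mem_sdiff, Set.mem_insert_iff, Set.mem_singleton_iff, not_or] at hrmem
  refine ⟨r, hrmem.1.1, hrmem.2.1, hrmem.2.2, fun x hx => ⟨fun hcol => ?_, ?_⟩⟩
  · by_contra! hne
    have : x ∈ (Z ∩ S) \ {p, q} := ⟨⟨hx, hcol⟩, by simp [hne.1, hne.2.1]⟩
    exact hne.2.2 (by simpa [hr] using this)
  · rintro (rfl | rfl | rfl)
    exacts [(hpqS (by simp)).2, (hpqS (by simp)).2, hrmem.1.2]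

theorem exists_isSteinerQuasigroup_collinear3 {Z : Set P2} (hZ : Z.Finite)
    (h3 : ∀ S : Set P2, IsLine S → 2 ≤ (Z ∩ S).ncard → (Z ∩ S).ncard = 3) :
    ∃ t : Z → Z → Z, IsSteinerQuasigroup t ∧
      ∀ p q x : Z, p ≠ q → (Collinear3 p q x ↔ x = p ∨ x = q ∨ x = t p q) := by
  have : ∀ p q : Z, ∃ r : Z, p ≠ q → r ≠ p ∧ r ≠ q ∧
      ∀ x : Z, Collinear3 p q x ↔ x = p ∨ x = q ∨ x = r := by
    intro p q
    by_cases hpq : p = q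
    · exact ⟨p, fun h => (h hpq).elim⟩
    obtain ⟨r, hr, hrp, hrq, hcol⟩ :=
      exists_third_point hZ h3 p.2 q.2 (Subtype.val_injective.ne hpq)
    refine ⟨⟨r, hr⟩, fun _ => ⟨Subtype.coe_ne_coe.1 hrp, Subtype.coe_ne_coe.1 hrq, fun x => ?_⟩⟩
    simpa [Subtype.ext_iff] using hcol x x.2
  choose τ hτ using this
  have hcolτ : ∀ p q : Z, p ≠ q → Collinear3 p q (τ p q) := fun p q hpq =>
    ((hτ p q hpq).2.2 _).2 (Or.inr (Or.inr rfl))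
  classical
  refine ⟨fun p q => if p = q then p else τ p q, ⟨fun p => if_pos rfl, fun p q => ?_, fun p q => ?_⟩,
    fun p q x hpq => by simpa [hpq] using (hτ p q hpq).2.2 x⟩
  · by_cases hpq : p = q
    · rw [hpq]
    rw [if_neg hpq, if_neg (Ne.symm hpq)]
    rcases ((hτ q p (Ne.symm hpq)).2.2 (τ p q)).1 (hcolτ p q hpq).swap₁₂ with h | h | h
    exacts [absurd h (hτ p q hpq).2.1, absurd h (hτ p q hpq).1, h]
  · by_cases hpq : p = q
    · simp [hpq]
    have hr := hτ p q hpq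
    rw [if_neg hpq, if_neg (Ne.symm hr.1)]
    rcases ((hτ p _ (Ne.symm hr.1)).2.2 q).1 (hcolτ p q hpq).swap₂₃ with h | h | h
    exacts [absurd h.symm hpq, absurd h.symm hr.2.1, h.symm]

-- The lines of the affine plane over `ZMod 3` are the triples `{x, y, -x - y}`.
def IsHesseLabelling (P : ZMod 3 × ZMod 3 → P2) : Prop :=
  Function.Injective P ∧
    ∀ x y z, x ≠ y → (Collinear3 (P x) (P y) (P z) ↔ z = x ∨ z = y ∨ z = -x - y)

theorem exists_isHesseLabelling {Z : Set P2} (hcard : Z.ncard = 9)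
    (h3 : ∀ S : Set P2, IsLine S → 2 ≤ (Z ∩ S).ncard → (Z ∩ S).ncard = 3) :
    ∃ P, IsHesseLabelling P ∧ Set.range P = Z := by
  have hZ : Z.Finite := Set.finite_of_ncard_ne_zero (by rw [hcard]; norm_num)
  have := hZ.to_subtype
  obtain ⟨t, ht, hcol⟩ := exists_isSteinerQuasigroup_collinear3 hZ h3
  obtain ⟨e, he⟩ := ht.exists_equiv_affinePlane (by rwa [Nat.card_coe_set_eq])
  refine ⟨Subtype.val ∘ e, ⟨Subtype.val_injective.comp e.injective, fun x y z hxy => ?_⟩, ?_⟩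
  · simp only [Function.comp_apply, hcol _ _ _ (e.injective.ne hxy), he, e.injective.eq_iff]
  · simp [Set.range_comp]

theorem IsHesseLabelling.projMap_comp {P : ZMod 3 × ZMod 3 → P2} (hP : IsHesseLabelling P)
    (g : ℂ³ ≃ₗ[ℂ] ℂ³) : IsHesseLabelling (projMap g ∘ P) :=
  ⟨(Projectivization.map_injective _ _).comp hP.1, fun x y z hxy => by
    simp only [Function.comp_apply, collinear3_projMap_iff, hP.2 x y z hxy]⟩

-- The Hesse configuration in the projective frame of the labels `(0, 0), (1, 0), (0, 1), (1, 1)`,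
-- for a root `c` of `c ^ 2 - c + 1`.
def hesseVec (c : ℂ) (v : ZMod 3 × ZMod 3) : ℂ³ :=
  vec3 (vec3 ![1, 0, 0] ![0, 0, 1] ![1, 0, 1 - c]) (vec3 ![0, 1, 0] ![1, 1, 1] ![1, c, 1])
    (vec3 ![1, c, 0] ![1, 1, 1 - c] ![0, 1, 1]) v.1 v.2

theorem hesseVec_ne_zero (c : ℂ) (v : ZMod 3 × ZMod 3) : hesseVec c v ≠ 0 := by
  obtain ⟨a, b⟩ := v
  rcases a.three_cases with rfl | rfl | rfl <;> rcases b.three_cases with rfl | rfl | rfl <;>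
    simp [hesseVec]

def hesse (c : ℂ) (v : ZMod 3 × ZMod 3) : P2 := mk ℂ (hesseVec c v) (hesseVec_ne_zero c v)

theorem IsHesseLabelling.eq_hesse {Q : ZMod 3 × ZMod 3 → P2} (hQ : IsHesseLabelling Q)
    (h00 : Q (0, 0) = mk ℂ ![1, 0, 0] (by simp)) (h10 : Q (1, 0) = mk ℂ ![0, 1, 0] (by simp))
    (h01 : Q (0, 1) = mk ℂ ![0, 0, 1] (by simp)) (h11 : Q (1, 1) = mk ℂ ![1, 1, 1] (by simp)) :
    ∃ c : ℂ, c ^ 2 - c + 1 = 0 ∧ Q = hesse c := by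
  have col : ∀ x y z, x ≠ y → -x - y = z → Collinear3 (Q x) (Q y) (Q z) := fun x y z hxy h =>
    (hQ.2 x y z hxy).2 (Or.inr (Or.inr h.symm))
  have third : ∀ x y z {u v : ℂ³} (hu : u ≠ 0) (hv : v ≠ 0), -x - y = z → x ≠ y → z ≠ y →
      Q x = mk ℂ u hu → Q y = mk ℂ v hv → ∃ (s : ℂ) (h : u + s • v ≠ 0), Q z = mk ℂ (u + s • v) h := by
    intro x y z u v hu hv hxyz hxy hzy hx hy
    refine exists_eq_mk_add_smul hu hv ?_ ?_ ?_
    · rw [← hx, ← hy]; exact hQ.1.ne hxy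
    · rw [← hx, ← hy]; exact col x y z hxy hxyz
    · rw [← hy]; exact hQ.1.ne hzy
  -- Five points are placed on lines through points already known; five more lines fix `c`.
  obtain ⟨c, _, hC⟩ := third (0, 0) (1, 0) (2, 0) _ _ (by decide) (by decide) (by decide) h00 h10
  obtain ⟨e, _, hE⟩ := third (0, 0) (0, 1) (0, 2) _ _ (by decide) (by decide) (by decide) h00 h01
  obtain ⟨f, _, hF⟩ := third (1, 0) (0, 1) (2, 2) _ _ (by decide) (by decide) (by decide) h10 h01
  obtain ⟨g, _, hG⟩ := third (2, 0) (0, 1) (1, 2) _ _ (by decide) (by decide) (by decide) hC h01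
  obtain ⟨j, _, hI⟩ := third (1, 1) (0, 1) (2, 1) _ _ (by decide) (by decide) (by decide) h11 h01
  have hf := col (0, 0) (2, 2) (1, 1) (by decide) (by decide)
  have hg := col (1, 0) (1, 2) (1, 1) (by decide) (by decide)
  have hcj := col (0, 0) (1, 2) (2, 1) (by decide) (by decide)
  have hce := col (2, 0) (0, 2) (1, 1) (by decide) (by decide)
  have hej := col (1, 0) (0, 2) (2, 1) (by decide) (by decide)
  rw [h00, hF, h11, collinear3_mk_iff] at hf
  rw [h10, hG, h11, collinear3_mk_iff] at hg
  rw [h00, hG, hI, collinear3_mk_iff] at hcj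
  rw [hC, hE, h11, collinear3_mk_iff] at hce
  rw [h10, hE, hI, collinear3_mk_iff] at hej
  simp [det_fin_three] at hf hg hcj hce hej
  obtain rfl : f = 1 := by linear_combination -hf
  obtain rfl : g = 1 := by linear_combination hg
  obtain rfl : j = e - 1 := by linear_combination -hej
  obtain rfl : e = 1 - c := by linear_combination hcj - hce
  refine ⟨c, by linear_combination -hcj, funext fun ⟨a, b⟩ => ?_⟩
  rcases a.three_cases with rfl | rfl | rfl <;> rcases b.three_cases with rfl | rfl | rfl <;>
    simp only [h00, h10, h01, h11, hC, hE, hF, hG, hI, hesse] <;> congr 1 <;> ext i <;>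
    fin_cases i <;> simp [hesseVec, sub_eq_add_neg]

theorem IsHesseLabelling.exists_eq_projMap_hesse {P : ZMod 3 × ZMod 3 → P2}
    (hP : IsHesseLabelling P) :
    ∃ (g : ℂ³ ≃ₗ[ℂ] ℂ³) (c : ℂ), c ^ 2 - c + 1 = 0 ∧ P = projMap g ∘ hesse c := by
  have hnc : ∀ x y z, x ≠ y → z ≠ x → z ≠ y → z ≠ -x - y → ¬Collinear3 (P x) (P y) (P z) := by
    intro x y z hxy hzx hzy hz
    rw [hP.2 x y z hxy]
    tauto
  obtain ⟨g, h00, h10, h01, h11⟩ := exists_linearEquiv_frame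
    (hnc (0, 0) (1, 0) (0, 1) (by decide) (by decide) (by decide) (by decide))
    (hnc (0, 0) (1, 0) (1, 1) (by decide) (by decide) (by decide) (by decide))
    (hnc (0, 0) (0, 1) (1, 1) (by decide) (by decide) (by decide) (by decide))
    (hnc (1, 0) (0, 1) (1, 1) (by decide) (by decide) (by decide) (by decide))
  obtain ⟨c, hc, hQ⟩ := (hP.projMap_comp g.symm).eq_hesse
    (by simp [← h00]) (by simp [← h10]) (by simp [← h01]) (by simp [← h11])
  refine ⟨g, c, hc, funext fun v => ?_⟩
  rw [Function.comp_apply, ← hQ, Function.comp_apply, projMap_projMap_symm]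

theorem IsPrimitiveRoot.sq_add_self_add_one {R : Type*} [CommRing R] [IsDomain R] {θ : R}
    (hθ : IsPrimitiveRoot θ 3) :
    θ ^ 2 + θ + 1 = 0 := by
  have h := hθ.geom_sum_eq_zero (by norm_num)
  simp only [Finset.sum_range_succ, Finset.sum_range_zero] at h
  linear_combination h

theorem exists_isPrimitiveRoot_eq_neg_sq {ω c : ℂ} (hω : IsPrimitiveRoot ω 3)
    (hc : c ^ 2 - c + 1 = 0) : ∃ θ : ℂ, IsPrimitiveRoot θ 3 ∧ c = -θ ^ 2 := by
  have h : (c + ω) * (c + ω ^ 2) = 0 := by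
    linear_combination hc + c * hω.sq_add_self_add_one + hω.pow_eq_one
  rcases mul_eq_zero.1 h with h | h
  · exact ⟨ω ^ 2, hω.pow_of_coprime 2 (by norm_num), by
      linear_combination h + ω * hω.pow_eq_one⟩
  · exact ⟨ω, hω, by linear_combination h⟩

-- The points of `F3 θ`, labelled as the images of `hesse (-θ ^ 2)` in
-- `exists_projMap_hesse_eq_fermat`.
def fermatVec (θ : ℂ) (v : ZMod 3 × ZMod 3) : ℂ³ :=
  vec3 (vec3 ![1, -1, 0] ![1, 0, -1] ![0, 1, -1]) (vec3 ![1, -θ, 0] ![1, 0, -θ ^ 2] ![0, 1, -θ])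
    (vec3 ![1, -θ ^ 2, 0] ![1, 0, -θ] ![0, 1, -θ ^ 2]) v.1 v.2

theorem fermatVec_ne_zero (θ : ℂ) (v : ZMod 3 × ZMod 3) : fermatVec θ v ≠ 0 := by
  obtain ⟨a, b⟩ := v
  rcases a.three_cases with rfl | rfl | rfl <;> rcases b.three_cases with rfl | rfl | rfl <;>
    simp [fermatVec]

def fermat (θ : ℂ) (v : ZMod 3 × ZMod 3) : P2 := mk ℂ (fermatVec θ v) (fermatVec_ne_zero θ v)

theorem F3_eq_range_fermat (θ : ℂ) : F3 θ = Set.range (fermat θ) := by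
  ext x
  simp [F3, Fin.exists_fin_succ, ZMod.exists_three, fermat, fermatVec, pt]
  tauto

theorem F3_subset_F3 {ω θ : ℂ} (hω : ω ^ 3 = 1) (hθ : IsPrimitiveRoot θ 3) : F3 ω ⊆ F3 θ := by
  intro x hx
  simp only [F3, Set.mem_iUnion] at hx ⊢
  obtain ⟨a, hx⟩ := hx
  obtain ⟨i, hi, hθi⟩ := hθ.eq_pow_of_pow_eq_one (ξ := ω ^ (a : ℕ))
    (by rw [← pow_mul, mul_comm, pow_mul, hω, one_pow])
  exact ⟨⟨i, hi⟩, by simpa only [hθi] using hx⟩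

theorem F3_eq_F3 {ω θ : ℂ} (hω : IsPrimitiveRoot ω 3) (hθ : IsPrimitiveRoot θ 3) : F3 ω = F3 θ :=
  (F3_subset_F3 hω.pow_eq_one hθ).antisymm (F3_subset_F3 hθ.pow_eq_one hω)

theorem exists_projMap_hesse_eq_fermat {θ : ℂ} (hθ : IsPrimitiveRoot θ 3) :
    ∃ μ : ℂ³ ≃ₗ[ℂ] ℂ³, projMap μ ∘ hesse (-θ ^ 2) = fermat θ := by
  have h := hθ.sq_add_self_add_one
  let M : Matrix (Fin 3) (Fin 3) ℂ := !![1, -θ ^ 2, θ ^ 2; -1, 1, 0; 0, 0, -θ ^ 2]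
  have hM : LinearMap.det (toLin' M) ≠ 0 := by
    rw [LinearMap.det_toLin', det_fin_three]
    simp [M]
    grind
  refine ⟨LinearMap.equivOfDetNeZero _ hM, funext fun ⟨a, b⟩ => ?_⟩
  rw [Function.comp_apply, hesse, projMap_mk, fermat, mk_eq_mk_iff_crossProduct_eq_zero]
  rcases a.three_cases with rfl | rfl | rfl <;> rcases b.three_cases with rfl | rfl | rfl <;>
    ext i <;> fin_cases i <;> simp [M, hesseVec, fermatVec, cross_apply] <;> grind

theorem projEquiv_image_image (μ g : ℂ³ ≃ₗ[ℂ] ℂ³) (A : Set P2) :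
    ProjEquiv (projMap μ '' A) (projMap g '' A) := by
  refine ⟨μ.symm.trans g, ?_⟩
  rw [Set.image_image]
  exact Set.image_congr fun p _ =>
    (congrArg (projMap g) (projMap_symm_projMap μ p)).symm.trans (projMap_trans _ _ _).symm

/-- The dual Fermat configuration `F₃` is, up to projective equivalence, the only
configuration of nine points of `ℙ²(ℂ)` with no simple lines and no `k`-rich lines
for `k ≥ 4`, i.e. such that every line meeting it in at least two points contains
exactly three of its points. -/
theorem stmt3 (ω : ℂ) (hω : IsPrimitiveRoot ω 3)
    (Z : Set P2) (hcard : Z.ncard = 9)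
    (h3 : ∀ S : Set P2, IsLine S → 2 ≤ (Z ∩ S).ncard → (Z ∩ S).ncard = 3) :
    ProjEquiv (F3 ω) Z := by
  obtain ⟨P, hP, rfl⟩ := exists_isHesseLabelling hcard h3
  obtain ⟨g, c, hc, rfl⟩ := hP.exists_eq_projMap_hesse
  obtain ⟨θ, hθ, rfl⟩ := exists_isPrimitiveRoot_eq_neg_sq hω hc
  obtain ⟨μ, hμ⟩ := exists_projMap_hesse_eq_fermat hθ
  rw [F3_eq_F3 hω hθ, F3_eq_range_fermat, ← hμ, Set.range_comp, Set.range_comp]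
  exact projEquiv_image_image μ g _
end
end

section
/- Let P be a general point of the complex projective plane, namely P = [a,b,c] with entries algebraically independent over Q (or just avoiding finitely many explicit polynomial conditions). Let Z consist of the nine points Z1=[-1,0,1], Z2=[0,-1,1], Z3=[1,0,1], Z4=[0,1,1], Z5=[0,0,1], Z6=[1,-1,0], Z7=[1,1,0], Z8=[0,1,0], Z9=[1,0,0]. Then the vector space of homogeneous quartic forms in C[x,y,z] vanishing at all points of Z and vanishing to order at least 3 at P has dimension at least 1, i.e., there exists a nonzero quartic through Z with a triple point at P. -/
/-! The quartic is written down explicitly, with coefficients polynomial in `P = (a, b, c)`.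
Its passing through `Z` and the vanishing of its second partial derivatives at `P` are polynomial
identities. For a homogeneous form, Euler's identity `∑ xᵢ ∂ᵢF = (deg F) F` then makes the first
derivatives and the value at `P` vanish as well. The form is nonzero as soon as `c ≠ 0`, which
holds for a general point. -/

open MvPolynomial

namespace MvPolynomial

variable {σ R : Type*} [CommRing R]

@[simp]
theorem pderiv_ofNat (i : σ) (n : ℕ) [n.AtLeastTwo] :
    pderiv i (ofNat(n) : MvPolynomial σ R) = 0 := by
  rw [← map_ofNat C n, pderiv_C]

variable [Fintype σ] [IsAddTorsionFree R] {φ : MvPolynomial σ R} {n : ℕ} {P : σ → R}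

theorem IsHomogeneous.eval_eq_zero_of_eval_pderiv_eq_zero (hφ : φ.IsHomogeneous n) (hn : n ≠ 0)
    (hP : ∀ i, eval P (pderiv i φ) = 0) : eval P φ = 0 := by
  have euler := congrArg (eval P) hφ.sum_X_mul_pderiv
  simp only [map_sum, map_mul, eval_X, hP, mul_zero, Finset.sum_const_zero, map_nsmul] at euler
  exact (smul_eq_zero.mp euler.symm).resolve_left hn

theorem IsHomogeneous.eval_pderiv_eq_zero_of_eval_pderiv_pderiv_eq_zero (hφ : φ.IsHomogeneous n)
    (hn : 2 ≤ n) (hP : ∀ i j, eval P (pderiv i (pderiv j φ)) = 0) (j : σ) :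
    eval P (pderiv j φ) = 0 :=
  hφ.pderiv.eval_eq_zero_of_eval_pderiv_eq_zero (by omega) (hP · j)

end MvPolynomial

section TripleQuartic

variable {R : Type*} [CommRing R]

def pointsZ : List (Fin 3 → R) :=
  [![-1, 0, 1], ![0, -1, 1], ![1, 0, 1], ![0, 1, 1], ![0, 0, 1],
    ![1, -1, 0], ![1, 1, 0], ![0, 1, 0], ![1, 0, 0]]

/-- Equivalently, `det (P³, X, X³) - 3 xyz · det (X, P, (bc, ca, ab))`, where `X = (x, y, z)`. -/
noncomputable def tripleQuartic (a b c : R) : MvPolynomial (Fin 3) R :=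
  C (a ^ 3) * (X 1 * X 2 ^ 3 - X 1 ^ 3 * X 2) + C (b ^ 3) * (X 0 ^ 3 * X 2 - X 0 * X 2 ^ 3)
    + C (c ^ 3) * (X 0 * X 1 ^ 3 - X 0 ^ 3 * X 1)
    - C (3 * a * (b ^ 2 - c ^ 2)) * (X 0 ^ 2 * X 1 * X 2)
    + C (3 * b * (a ^ 2 - c ^ 2)) * (X 0 * X 1 ^ 2 * X 2)
    - C (3 * c * (a ^ 2 - b ^ 2)) * (X 0 * X 1 * X 2 ^ 2)

theorem eval_tripleQuartic (a b c x y z : R) :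
    eval ![x, y, z] (tripleQuartic a b c) =
      a ^ 3 * (y * z ^ 3 - y ^ 3 * z) + b ^ 3 * (x ^ 3 * z - x * z ^ 3)
        + c ^ 3 * (x * y ^ 3 - x ^ 3 * y) - 3 * a * (b ^ 2 - c ^ 2) * (x ^ 2 * y * z)
        + 3 * b * (a ^ 2 - c ^ 2) * (x * y ^ 2 * z)
        - 3 * c * (a ^ 2 - b ^ 2) * (x * y * z ^ 2) := by
  simp [tripleQuartic]

theorem tripleQuartic_isHomogeneous (a b c : R) : (tripleQuartic a b c).IsHomogeneous 4 := by
  have hX (i : Fin 3) : (X i : MvPolynomial (Fin 3) R).IsHomogeneous 1 := isHomogeneous_X R i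
  have hX2 (i : Fin 3) := isHomogeneous_X_pow (R := R) i 2
  have hX3 (i : Fin 3) := isHomogeneous_X_pow (R := R) i 3
  have hXY3 (i j : Fin 3) : (X i * X j ^ 3 : MvPolynomial (Fin 3) R).IsHomogeneous 4 :=
    (hX i).mul (hX3 j)
  have hX3Y (i j : Fin 3) : (X i ^ 3 * X j : MvPolynomial (Fin 3) R).IsHomogeneous 4 :=
    (hX3 i).mul (hX j)
  have hX2YZ : (X 0 ^ 2 * X 1 * X 2 : MvPolynomial (Fin 3) R).IsHomogeneous 4 :=
    ((hX2 0).mul (hX 1)).mul (hX 2)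
  have hXY2Z : (X 0 * X 1 ^ 2 * X 2 : MvPolynomial (Fin 3) R).IsHomogeneous 4 :=
    ((hX 0).mul (hX2 1)).mul (hX 2)
  have hXYZ2 : (X 0 * X 1 * X 2 ^ 2 : MvPolynomial (Fin 3) R).IsHomogeneous 4 :=
    ((hX 0).mul (hX 1)).mul (hX2 2)
  exact (((((((hXY3 1 2).sub (hX3Y 1 2)).C_mul _).add (((hX3Y 0 2).sub (hXY3 0 2)).C_mul _)).add
    (((hXY3 0 1).sub (hX3Y 0 1)).C_mul _)).sub (hX2YZ.C_mul _)).add (hXY2Z.C_mul _)).sub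
    (hXYZ2.C_mul _)

theorem tripleQuartic_ne_zero [IsDomain R] [CharZero R] {a b c : R} (hc : c ≠ 0) :
    tripleQuartic a b c ≠ 0 := by
  intro h
  have h120 := congrArg (eval ![1, 2, 0]) h
  rw [eval_tripleQuartic, map_zero] at h120
  have : 6 * c ^ 3 = 0 := by linear_combination h120
  simp [hc] at this

theorem eval_tripleQuartic_of_mem_pointsZ (a b c : R) {z : Fin 3 → R} (hz : z ∈ pointsZ) :
    eval z (tripleQuartic a b c) = 0 := by
  fin_cases hz <;> (rw [eval_tripleQuartic]; ring)

theorem eval_pderiv_pderiv_tripleQuartic (a b c : R) (i j : Fin 3) :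
    eval ![a, b, c] (pderiv i (pderiv j (tripleQuartic a b c))) = 0 := by
  fin_cases i <;> fin_cases j <;>
  · simp [tripleQuartic, pderiv_X]
    ring

end TripleQuartic

/-- For a general point `P = [a,b,c]` (entries algebraically independent over `ℚ`),
there is a nonzero quartic form passing through the nine points of the configuration
`Z` of Example 1.5 and having a point of multiplicity at least three at `P`. -/
theorem stmt4 (a b c : ℂ) (hgen : AlgebraicIndependent ℚ ![a, b, c]) :
    ∃ F : MvPolynomial (Fin 3) ℂ, F ≠ 0 ∧ F.IsHomogeneous 4 ∧
      (∀ z ∈ ([![(-1 : ℂ), 0, 1], ![0, -1, 1], ![1, 0, 1], ![0, 1, 1], ![0, 0, 1],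
          ![1, -1, 0], ![1, 1, 0], ![0, 1, 0], ![1, 0, 0]] :
          List (Fin 3 → ℂ)), eval z F = 0) ∧
      eval ![a, b, c] F = 0 ∧
      (∀ i : Fin 3, eval ![a, b, c] (pderiv i F) = 0) ∧
      (∀ i j : Fin 3, eval ![a, b, c] (pderiv i (pderiv j F)) = 0) := by
  have hc : c ≠ 0 := fun h ↦ hgen.transcendental 2 (h ▸ isAlgebraic_zero)
  have hF := tripleQuartic_isHomogeneous a b c
  have h2 := eval_pderiv_pderiv_tripleQuartic a b c
  have h1 := hF.eval_pderiv_eq_zero_of_eval_pderiv_pderiv_eq_zero (by norm_num) h2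
  exact ⟨tripleQuartic a b c, tripleQuartic_ne_zero hc, hF,
    fun _ ↦ eval_tripleQuartic_of_mem_pointsZ a b c,
    hF.eval_eq_zero_of_eval_pderiv_eq_zero (by norm_num) h1, h1, h2⟩
end

section
/- Let F be a nonzero homogeneous polynomial of degree d in C[x,y,z] that vanishes to order at least m at a point P of a line L (defined by linear form ℓ) and also vanishes at k further distinct points of L different from P, with m + k ≥ d+1. Then ℓ divides F. -/
/-!
Choose `B` on the plane `ℓ = 0` off the lines through `P` and through the `p i`, so that the
plane is spanned by `P` and `B`. The restriction `t ↦ F (P + t • B)` is a polynomial of degree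
at most `d`; it is divisible by `t ^ m`, because its derivatives are combinations of partial
derivatives of `F` along the line, and it vanishes at the `k` distinct nonzero parameters of the
`p i`. As `m + k > d` it is zero, so by homogeneity `F` vanishes on the whole plane, and a
polynomial vanishing on the zero set of a nonzero linear form is divisible by it.
-/

open MvPolynomial

theorem Polynomial.X_pow_succ_dvd_of_coeff_zero_of_X_pow_dvd_derivative {R : Type*} [Semiring R]
    [NoZeroDivisors R] [CharZero R] {q : Polynomial R} {m : ℕ} (h0 : q.coeff 0 = 0)
    (h : X ^ m ∣ derivative q) : X ^ (m + 1) ∣ q := by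
  rw [X_pow_dvd_iff] at h ⊢
  rintro (_ | n) hn
  · exact h0
  · have := h n (by omega)
    rw [coeff_derivative, mul_eq_zero] at this
    exact this.resolve_right (Nat.cast_add_one_ne_zero n)

namespace Submodule

variable {K M : Type*} [Field K] [AddCommGroup M] [Module K M]

theorem exists_mem_forall_notMem_span_singleton [Infinite K] {ι : Type*} [Finite ι]
    {W : Submodule K M} (hW : 2 ≤ Module.finrank K W) (v : ι → M) :
    ∃ B ∈ W, ∀ i, B ∉ K ∙ v i := by
  obtain ⟨B, hB⟩ := exists_forall_notMem_of_forall_ne_top (fun i => (K ∙ v i).comap W.subtype)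
    fun i htop => by
      have hle := finrank_mono (comap_subtype_eq_top.mp htop)
      have := finrank_span_le_card (R := K) ({v i} : Set M)
      simp only [Set.toFinset_singleton, Finset.card_singleton] at this
      omega
  exact ⟨B, B.2, hB⟩

theorem eq_span_pair_of_finrank_eq_two {W : Submodule K M} (hW : Module.finrank K W = 2)
    {P B : M} (hP : P ∈ W) (hB : B ∈ W) (hP0 : P ≠ 0) (hBP : B ∉ K ∙ P) :
    W = span K {P, B} := by
  have : FiniteDimensional K W := .of_finrank_pos (by omega)
  have : FiniteDimensional K (span K {P, B}) := .span_of_finite K (Set.toFinite _)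
  have hlt : K ∙ P < span K {P, B} :=
    lt_of_le_of_ne (span_mono (by simp)) fun h => hBP (h ▸ subset_span (by simp))
  have := finrank_lt_finrank_of_lt hlt
  rw [finrank_span_singleton hP0] at this
  refine (eq_of_le_of_finrank_le (span_le.mpr ?_) ?_).symm
  · simp [Set.insert_subset_iff, hP, hB]
  · omega

theorem exists_eq_smul_add_smul_of_mem_span_pair {P B p : M} (hp : p ∈ span K {P, B})
    (hpP : ∀ t : K, p ≠ t • P) (hBp : B ∉ K ∙ p) :
    ∃ a t : K, a ≠ 0 ∧ t ≠ 0 ∧ p = a • (P + t • B) := by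
  obtain ⟨a, b, rfl⟩ := mem_span_pair.mp hp
  have hb : b ≠ 0 := by
    rintro rfl
    exact hpP a (by simp)
  have ha : a ≠ 0 := by
    rintro rfl
    exact hBp (mem_span_singleton.mpr ⟨b⁻¹, by simp [smul_smul, inv_mul_cancel₀ hb]⟩)
  exact ⟨a, b / a, ha, div_ne_zero hb ha, by rw [smul_add, smul_smul, mul_div_cancel₀ _ ha]⟩

end Submodule

namespace MvPolynomial

variable {σ R K : Type*}

noncomputable def restrictLine [CommSemiring R] (P B : σ → R) :
    MvPolynomial σ R →ₐ[R] Polynomial R :=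
  aeval fun i => Polynomial.C (P i) + Polynomial.C (B i) * Polynomial.X

def VanishesToOrder [CommSemiring R] (F : MvPolynomial σ R) (P : σ → R) (m : ℕ) : Prop :=
  ∀ l : List σ, l.length < m → eval P (l.foldr (fun i G => pderiv i G) F) = 0

section CommSemiring

variable [CommSemiring R]

theorem eval_restrictLine (P B : σ → R) (F : MvPolynomial σ R) (t : R) :
    (restrictLine P B F).eval t = eval (P + t • B) F := by
  rw [← Polynomial.coe_aeval_eq_eval, restrictLine, comp_aeval_apply, ← aeval_eq_eval]
  congr with i
  simp only [map_add, map_mul, Polynomial.aeval_C, Polynomial.aeval_X, Pi.add_apply,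
    Pi.smul_apply, smul_eq_mul, Algebra.algebraMap_self, RingHom.id_apply]
  ring

theorem natDegree_restrictLine_le (P B : σ → R) (F : MvPolynomial σ R) :
    (restrictLine P B F).natDegree ≤ F.totalDegree := by
  rw [restrictLine, aeval_eq_eval₂Hom, coe_eval₂Hom, eval₂_eq]
  refine Polynomial.natDegree_sum_le_of_forall_le _ _ fun s hs => ?_
  refine (Polynomial.natDegree_C_mul_le _ _).trans <| (Polynomial.natDegree_prod_le _ _).trans ?_
  refine (Finset.sum_le_sum fun i _ => Polynomial.natDegree_pow_le_of_le (m := 1) (s i) ?_).trans ?_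
  · exact (Polynomial.natDegree_add_le _ _).trans <|
      max_le (by simp) ((Polynomial.natDegree_C_mul_le _ _).trans Polynomial.natDegree_X_le)
  · simpa [Finsupp.sum] using le_totalDegree hs

theorem derivative_aeval [Fintype σ] (f : σ → Polynomial R) (F : MvPolynomial σ R) :
    Polynomial.derivative (aeval f F) =
      ∑ i, aeval f (pderiv i F) * Polynomial.derivative (f i) := by
  classical
  induction F using MvPolynomial.induction_on with
  | C a => simp
  | add p q hp hq => simp [hp, hq, add_mul, Finset.sum_add_distrib]
  | mul_X p i hp =>
    simp only [map_mul, aeval_X, Polynomial.derivative_mul, hp, Finset.sum_mul,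
      Derivation.leibniz, pderiv_X, Pi.single_apply, smul_eq_mul, mul_ite, mul_one, mul_zero,
      map_add, apply_ite (aeval f), map_zero, add_mul, ite_mul, zero_mul, Finset.sum_add_distrib,
      Finset.sum_ite_eq, Finset.mem_univ, ↓reduceIte]
    rw [add_comm]
    exact congrArg₂ _ rfl (Finset.sum_congr rfl fun j _ => by ring)

theorem IsHomogeneous.eval_smul {F : MvPolynomial σ R} {n : ℕ} (hF : F.IsHomogeneous n)
    (t : R) (x : σ → R) : eval (t • x) F = t ^ n * eval x F := by
  simp only [eval_eq, Finset.mul_sum, Pi.smul_apply, smul_eq_mul, mul_pow,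
    Finset.prod_mul_distrib, Finset.prod_pow_eq_pow_sum]
  refine Finset.sum_congr rfl fun s hs => ?_
  have hdeg : ∑ i ∈ s.support, s i = n := by
    rw [← Finsupp.degree_apply, Finsupp.degree_eq_weight_one]
    exact hF (mem_support_iff.mp hs)
  rw [hdeg]
  ring

theorem IsHomogeneous.exists_dual_eval_eq [Fintype σ] {ℓ : MvPolynomial σ R}
    (hℓ : ℓ.IsHomogeneous 1) : ∃ φ : Module.Dual R (σ → R), ∀ x, eval x ℓ = φ x := by
  have hmem : ℓ ∈ Submodule.span R (Set.range X) := by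
    rw [← homogeneousSubmodule_one_eq_span_X]
    exact hℓ
  obtain ⟨c, rfl⟩ := (Submodule.mem_span_range_iff_exists_fun R).mp hmem
  exact ⟨∑ i, c i • LinearMap.proj i, fun x => by simp⟩

namespace VanishesToOrder

variable {F : MvPolynomial σ R} {P : σ → R} {m : ℕ}

theorem eval_eq_zero (h : VanishesToOrder F P (m + 1)) : eval P F = 0 :=
  h [] m.succ_pos

theorem pderiv (h : VanishesToOrder F P (m + 1)) (i : σ) : VanishesToOrder (pderiv i F) P m :=
  fun l hl => by simpa using h (l ++ [i]) (by simpa)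

end VanishesToOrder

end CommSemiring

section Domain

variable [CommRing R] [IsDomain R]

theorem VanishesToOrder.X_pow_dvd_restrictLine [CharZero R] [Fintype σ] {F : MvPolynomial σ R}
    {P : σ → R} {m : ℕ} (h : VanishesToOrder F P m) (B : σ → R) :
    Polynomial.X ^ m ∣ restrictLine P B F := by
  induction m generalizing F with
  | zero => simp
  | succ m ih =>
    refine Polynomial.X_pow_succ_dvd_of_coeff_zero_of_X_pow_dvd_derivative ?_ ?_
    · simpa [Polynomial.coeff_zero_eq_eval_zero, eval_restrictLine] using h.eval_eq_zero
    · rw [restrictLine, derivative_aeval]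
      exact Finset.dvd_sum fun i _ => (ih (h.pderiv i)).mul_right _

theorem restrictLine_eq_zero_of_roots [CharZero R] [Fintype σ] {d m k : ℕ}
    (hmk : d + 1 ≤ m + k) {F : MvPolynomial σ R} (hF : F.totalDegree ≤ d) {P : σ → R}
    (hP : VanishesToOrder F P m) (B : σ → R) (t : Fin k → R) (ht : Function.Injective t)
    (ht0 : ∀ i, t i ≠ 0) (hroot : ∀ i, eval (P + t i • B) F = 0) :
    restrictLine P B F = 0 := by
  obtain ⟨r, hr⟩ := hP.X_pow_dvd_restrictLine B
  suffices r = 0 by rw [hr, this, mul_zero]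
  by_contra hr0
  refine hr0 (Polynomial.eq_zero_of_natDegree_lt_card_of_eval_eq_zero r ht (fun i => ?_) ?_)
  · have := hroot i
    rwa [← eval_restrictLine, hr, Polynomial.eval_mul, Polynomial.eval_pow, Polynomial.eval_X,
      mul_eq_zero, or_iff_right (pow_ne_zero _ (ht0 i))] at this
  · have := (natDegree_restrictLine_le P B F).trans hF
    rw [hr, Polynomial.natDegree_mul (pow_ne_zero _ Polynomial.X_ne_zero) hr0,
      Polynomial.natDegree_X_pow] at this
    simp only [Fintype.card_fin]
    omega

theorem eval_eq_zero_of_eventually [Infinite R] {F : MvPolynomial σ R} {x y : σ → R}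
    (h : ∀ᶠ t : R in Filter.cofinite, eval (x + t • y) F = 0) : eval x F = 0 := by
  have hzero : restrictLine x y F = 0 := Polynomial.eq_zero_of_infinite_isRoot _ <| by
    simpa [eval_restrictLine] using Filter.frequently_cofinite_iff_infinite.mp h.frequently
  simpa [eval_restrictLine] using congrArg (Polynomial.eval 0) hzero

end Domain

section Field

variable [Field K]

theorem IsHomogeneous.eval_smul_add_smul_eq_zero [Infinite K] {F : MvPolynomial σ K}
    {n : ℕ} (hF : F.IsHomogeneous n) {P B : σ → K} (h : restrictLine P B F = 0) (a b : K) :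
    eval (a • P + b • B) F = 0 := by
  have hne : ∀ s ≠ (0 : K), eval (s • P + b • B) F = 0 := fun s hs => by
    rw [show s • P + b • B = s • (P + (b / s) • B) by
      rw [smul_add, smul_smul, mul_div_cancel₀ _ hs], hF.eval_smul, ← eval_restrictLine, h,
      Polynomial.eval_zero, mul_zero]
  -- `hne` misses `a = 0`; reach those points by moving along `P`
  refine eval_eq_zero_of_eventually (y := P) ?_
  filter_upwards [Filter.eventually_cofinite_ne (-a)] with t ht
  rw [show a • P + b • B + t • P = (a + t) • P + b • B by module]
  exact hne _ fun h => ht (by linear_combination h)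

/-- The substitution `X ↦ X - ℓ • v`, with `φ v = 1`, is the identity modulo `ℓ` and maps every
point into the hyperplane `φ = 0`. -/
theorem dvd_of_forall_eval_eq_zero [Infinite K] {ℓ F : MvPolynomial σ K}
    (φ : Module.Dual K (σ → K)) (hφ : ∀ x, eval x ℓ = φ x) (hφ0 : φ ≠ 0)
    (hF : ∀ x, φ x = 0 → eval x F = 0) : ℓ ∣ F := by
  obtain ⟨v, hv⟩ := LinearMap.surjective hφ0 1
  set g : σ → MvPolynomial σ K := fun i => X i - C (v i) * ℓ
  have hg : aeval g F = 0 := MvPolynomial.funext fun x => by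
    rw [map_zero, ← aeval_eq_eval, comp_aeval_apply, aeval_eq_eval]
    apply hF
    have hy : (fun i => aeval x (g i)) = x - φ x • v := by
      ext i
      simp [g, hφ, mul_comm]
    rw [hy, map_sub, map_smul, hv, smul_eq_mul, mul_one, sub_self]
  have hgX : (fun i => Ideal.Quotient.mkₐ K (Ideal.span {ℓ}) (X i)) =
      fun i => Ideal.Quotient.mkₐ K (Ideal.span {ℓ}) (g i) := by
    ext i
    simp [g, Ideal.Quotient.mkₐ_eq_mk]
  rw [← Ideal.mem_span_singleton, ← Ideal.Quotient.eq_zero_iff_mem, ← Ideal.Quotient.mkₐ_eq_mk K,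
    ← aeval_X_left_apply F, comp_aeval_apply, hgX, ← comp_aeval_apply, hg, map_zero]

theorem eval_eq_zero_of_mem_of_finrank_eq_two [CharZero K] [Fintype σ]
    {W : Submodule K (σ → K)} (hW : Module.finrank K W = 2) {d m k : ℕ} (hmk : d + 1 ≤ m + k)
    {F : MvPolynomial σ K} (hF : F.IsHomogeneous d) {P : σ → K} (hPW : P ∈ W) (hP0 : P ≠ 0)
    (hP : VanishesToOrder F P m) (p : Fin k → σ → K) (hpW : ∀ i, p i ∈ W)
    (hdist : ∀ i j, i ≠ j → ∀ t : K, p i ≠ t • p j) (hdistP : ∀ i, ∀ t : K, p i ≠ t • P)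
    (hvan : ∀ i, eval (p i) F = 0) {w : σ → K} (hw : w ∈ W) : eval w F = 0 := by
  obtain ⟨B, hBW, hB⟩ := W.exists_mem_forall_notMem_span_singleton hW.ge (Option.elim · P p)
  have hWPB := Submodule.eq_span_pair_of_finrank_eq_two hW hPW hBW hP0 (hB none)
  choose a t ha ht hpat using fun i =>
    Submodule.exists_eq_smul_add_smul_of_mem_span_pair (hWPB ▸ hpW i) (hdistP i) (hB (some i))
  have hline : restrictLine P B F = 0 := by
    refine restrictLine_eq_zero_of_roots hmk hF.totalDegree_le hP B t (fun i j hij => ?_) ht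
      fun i => ?_
    · by_contra hne
      exact hdist i j hne (a i / a j)
        (by rw [hpat i, hpat j, hij, smul_smul, div_mul_cancel₀ _ (ha j)])
    · have := hvan i
      rwa [hpat i, hF.eval_smul, mul_eq_zero, or_iff_right (pow_ne_zero _ (ha i))] at this
  obtain ⟨x, y, rfl⟩ := Submodule.mem_span_pair.mp (hWPB ▸ hw)
  exact hF.eval_smul_add_smul_eq_zero hline x y

end Field

end MvPolynomial

theorem stmt9_general (d m k : ℕ) (hmk : d + 1 ≤ m + k)
    (F : MvPolynomial (Fin 3) ℂ) (hF : F.IsHomogeneous d)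
    (ℓ : MvPolynomial (Fin 3) ℂ) (hℓ0 : ℓ ≠ 0) (hℓ : ℓ.IsHomogeneous 1)
    (P : Fin 3 → ℂ) (hP0 : P ≠ 0) (hPon : eval P ℓ = 0)
    (hmult : ∀ l : List (Fin 3), l.length < m →
      eval P (l.foldr (fun i G => pderiv i G) F) = 0)
    (p : Fin k → Fin 3 → ℂ)
    (honline : ∀ i, eval (p i) ℓ = 0)
    (hdist : ∀ i j, i ≠ j → ∀ t : ℂ, p i ≠ t • p j)
    (hdistP : ∀ i, ∀ t : ℂ, p i ≠ t • P)
    (hvan : ∀ i, eval (p i) F = 0) : ℓ ∣ F := by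
  obtain ⟨φ, hφ⟩ := hℓ.exists_dual_eval_eq
  have hφ0 : φ ≠ 0 := by
    rintro rfl
    exact hℓ0 (MvPolynomial.funext fun x => by simp [hφ])
  have hW : Module.finrank ℂ (LinearMap.ker φ) = 2 := by
    have := φ.finrank_ker_add_one_of_ne_zero hφ0
    simp only [Module.finrank_fin_fun] at this
    omega
  refine dvd_of_forall_eval_eq_zero φ hφ hφ0 fun x hx => ?_
  exact eval_eq_zero_of_mem_of_finrank_eq_two hW hmk hF (by simpa [hφ] using hPon) hP0 hmult p
    (fun i => by simpa [hφ] using honline i) hdist hdistP hvan hx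

/-- Multiplicity-refined Bézout divisibility: a nonzero form of degree `d` vanishing to
order at least `m` at a point `P` of a line and at `k` further distinct points of the
line, with `m + k ≥ d + 1`, is divisible by the linear form of the line. -/
theorem stmt9 (d m k : ℕ) (hmk : d + 1 ≤ m + k)
    (F : MvPolynomial (Fin 3) ℂ) (hF0 : F ≠ 0) (hF : F.IsHomogeneous d)
    (ℓ : MvPolynomial (Fin 3) ℂ) (hℓ0 : ℓ ≠ 0) (hℓ : ℓ.IsHomogeneous 1)
    (P : Fin 3 → ℂ) (hP0 : P ≠ 0) (hPon : eval P ℓ = 0)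
    (hmult : ∀ l : List (Fin 3), l.length < m →
      eval P (l.foldr (fun i G => pderiv i G) F) = 0)
    (p : Fin k → Fin 3 → ℂ) (hp0 : ∀ i, p i ≠ 0)
    (honline : ∀ i, eval (p i) ℓ = 0)
    (hdist : ∀ i j, i ≠ j → ∀ t : ℂ, p i ≠ t • p j)
    (hdistP : ∀ i, ∀ t : ℂ, p i ≠ t • P)
    (hvan : ∀ i, eval (p i) F = 0) : ℓ ∣ F :=
  stmt9_general d m k hmk F hF ℓ hℓ0 hℓ P hP0 hPon hmult p honline hdist hdistP hvan
end

section
/- Let ω be a primitive cube root of unity and let W5 = {[1,0,0], [0,1,0], [0,0,1], [1,1,1], [1,a,0]} for a parameter a ∈ C with a ∉ {0,1}, so [1,a,0] is distinct from the other points and lies on the line z=0 through [1,0,0] and [0,1,0], which is the unique 3-rich line of W5. Then for a general point P=[1,b,c], the ideal of quartic forms vanishing on W5 and vanishing to order 2 at P has dimension exactly the expected one; equivalently, the scheme W5 + 2P imposes independent conditions: the number of conditions m(j) = binom(j+3,2) − h(j+1) satisfies m(1)=0 and m(2)=2 (splitting type (2,2)). -/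
open MvPolynomial

noncomputable section

/-- The five points of the configuration `W₅` (with parameter `a`). -/
def W5pts (a : ℂ) : List (Fin 3 → ℂ) :=
  [![1, 0, 0], ![0, 1, 0], ![0, 0, 1], ![1, 1, 1], ![1, a, 0]]

/-- A form of degree `n` lies in the degree-`n` part of `I(W₅) ∩ I(P)^j` (for `j ≤ 2`),
i.e. it vanishes on `W₅` and to order at least `j` at `P = [1,b,c]`. -/
def W5cond (a b c : ℂ) (n j : ℕ) (F : MvPolynomial (Fin 3) ℂ) : Prop :=
  F.IsHomogeneous n ∧ (∀ z ∈ W5pts a, eval z F = 0) ∧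
    eval ![1, b, c] F = 0 ∧
    (2 ≤ j → ∀ i : Fin 3, eval ![1, b, c] (pderiv i F) = 0)

/-!
A conic through `W₅` contains the 3-rich line `z = 0`, so it is `z · ℓ` with `ℓ` a line through
`[0,0,1]`, `[1,1,1]` and `P`; for general `P` this forces `ℓ = 0`.

For cubics through `W₅` singular at `P`, two members are visible: `F = z · ℓ₁ · ℓ₂`, with `ℓ₁, ℓ₂`
the lines joining `P` to `[0,0,1]` and to `[1,1,1]`, and `G = ℓ₃ · Q`, with `ℓ₃` the line joining
`P` to `[1,0,0]` and `Q` the conic through `P` and the other four points of `W₅`. A cubic of the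
system that is also singular at `[1,0,0]` vanishes (a direct computation on coefficients), so
`H ↦ (∂_y H, ∂_z H)([1,0,0])` embeds the system into `ℂ²`, where the images of `F` and `G` are
independent.
-/

theorem MvPolynomial.IsHomogeneous.eq_sum_monomial_of_subset {σ R : Type*} [CommSemiring R]
    {p : MvPolynomial σ R} {n : ℕ} (hp : p.IsHomogeneous n) (S : Finset (σ →₀ ℕ))
    (hS : ∀ d : σ →₀ ℕ, d.degree = n → d ∈ S) :
    p = ∑ d ∈ S, monomial d (coeff d p) := by
  conv_lhs => rw [p.as_sum]
  refine Finset.sum_subset (fun d hd => hS d ?_) (fun d _ hd => ?_)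
  · rw [Finsupp.degree_eq_weight_one]
    exact hp (mem_support_iff.mp hd)
  · rw [notMem_support_iff.mp hd, monomial_zero]

theorem Submodule.le_span_pair_of_linearIndependent_map {K M N : Type*} [Field K]
    [AddCommGroup M] [Module K M] [AddCommGroup N] [Module K N] (hN : Module.finrank K N = 2)
    {V : Submodule K M} {f : M →ₗ[K] N} (hf : ∀ z ∈ V, f z = 0 → z = 0) {x y : M}
    (hx : x ∈ V) (hy : y ∈ V) (hxy : LinearIndependent K ![f x, f y]) :
    V ≤ span K {x, y} := by
  have hspan : span K {f x, f y} = ⊤ := by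
    rw [← Matrix.range_cons_cons_empty (f x) (f y) ![]]
    exact hxy.span_eq_top_of_card_eq_finrank (by simp [hN])
  intro z hz
  obtain ⟨s, t, hst⟩ := mem_span_pair.mp (hspan ▸ mem_top : f z ∈ span K {f x, f y})
  have hzero := hf (z - (s • x + t • y))
    (V.sub_mem hz (V.add_mem (V.smul_mem s hx) (V.smul_mem t hy))) (by simp [hst])
  exact mem_span_pair.mpr ⟨s, t, (sub_eq_zero.mp hzero).symm⟩

def monExp (i j k : ℕ) : Fin 3 →₀ ℕ := Finsupp.equivFunOnFinite.symm ![i, j, k]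

@[simp] lemma monExp_apply_zero (i j k : ℕ) : monExp i j k 0 = i := rfl
@[simp] lemma monExp_apply_one (i j k : ℕ) : monExp i j k 1 = j := rfl
@[simp] lemma monExp_apply_two (i j k : ℕ) : monExp i j k 2 = k := rfl

lemma eq_monExp (d : Fin 3 →₀ ℕ) : d = monExp (d 0) (d 1) (d 2) := by
  ext m; fin_cases m <;> rfl

@[simp] lemma monExp_inj {i j k p q r : ℕ} :
    monExp i j k = monExp p q r ↔ i = p ∧ j = q ∧ k = r := by
  simp [monExp, Matrix.vecCons_inj]

lemma monomial_monExp {R : Type*} [CommSemiring R] (i j k : ℕ) (r : R) :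
    monomial (monExp i j k) r = C r * X 0 ^ i * X 1 ^ j * X 2 ^ k := by
  simp [monomial_eq, Finsupp.prod_fintype, Fin.prod_univ_three, mul_assoc]

lemma Finsupp.degree_eq_fin_three (d : Fin 3 →₀ ℕ) : d.degree = d 0 + d 1 + d 2 := by
  simp [Finsupp.degree_eq_sum, Fin.sum_univ_three]

def conicExps : Finset (Fin 3 →₀ ℕ) :=
  {monExp 2 0 0, monExp 1 1 0, monExp 1 0 1, monExp 0 2 0, monExp 0 1 1, monExp 0 0 2}

def cubicExps : Finset (Fin 3 →₀ ℕ) :=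
  {monExp 3 0 0, monExp 2 1 0, monExp 2 0 1, monExp 1 2 0, monExp 1 1 1, monExp 1 0 2,
    monExp 0 3 0, monExp 0 2 1, monExp 0 1 2, monExp 0 0 3}

lemma mem_conicExps {d : Fin 3 →₀ ℕ} (hd : d.degree = 2) : d ∈ conicExps := by
  rw [d.degree_eq_fin_three] at hd
  rw [eq_monExp d]
  generalize d 0 = i, d 1 = j, d 2 = k at hd ⊢
  obtain rfl : k = 2 - i - j := by omega
  have : i ≤ 2 := by omega
  have : j ≤ 2 - i := by omega
  interval_cases i <;> interval_cases j <;> simp [conicExps]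

lemma mem_cubicExps {d : Fin 3 →₀ ℕ} (hd : d.degree = 3) : d ∈ cubicExps := by
  rw [d.degree_eq_fin_three] at hd
  rw [eq_monExp d]
  generalize d 0 = i, d 1 = j, d 2 = k at hd ⊢
  obtain rfl : k = 3 - i - j := by omega
  have : i ≤ 3 := by omega
  have : j ≤ 3 - i := by omega
  interval_cases i <;> interval_cases j <;> simp [cubicExps]

def W5space (a b c : ℂ) (n j : ℕ) : Submodule ℂ (MvPolynomial (Fin 3) ℂ) where
  carrier := {F | W5cond a b c n j F}
  zero_mem' := ⟨isHomogeneous_zero _ _ _, by simp, by simp, by simp⟩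
  add_mem' := fun ⟨hF, hFW, hFP, hFd⟩ ⟨hG, hGW, hGP, hGd⟩ =>
    ⟨hF.add hG, fun z hz => by simp [hFW z hz, hGW z hz], by simp [hFP, hGP],
      fun hj i => by simp [hFd hj i, hGd hj i]⟩
  smul_mem' := fun s F ⟨hF, hFW, hFP, hFd⟩ =>
    ⟨(homogeneousSubmodule _ _ n).smul_mem s hF, fun z hz => by simp [smul_eq_C_mul, hFW z hz],
      by simp [smul_eq_C_mul, hFP], fun hj i => by simp [smul_eq_C_mul, hFd hj i]⟩

namespace W5cond

variable {a b c : ℂ} {H : MvPolynomial (Fin 3) ℂ}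

theorem conic_eq_zero (hH : W5cond a b c 2 1 H) (ha0 : a ≠ 0) (hc0 : c ≠ 0) (hb1 : b ≠ 1) :
    H = 0 := by
  obtain ⟨hhom, hW, hP, -⟩ := hH
  have hrep := hhom.eq_sum_monomial_of_subset conicExps fun d => mem_conicExps
  have e1 := hW ![1, 0, 0] (by simp [W5pts])
  have e2 := hW ![0, 1, 0] (by simp [W5pts])
  have e3 := hW ![0, 0, 1] (by simp [W5pts])
  have e4 := hW ![1, 1, 1] (by simp [W5pts])
  have e5 := hW ![1, a, 0] (by simp [W5pts])
  rw [hrep] at e1 e2 e3 e4 e5 hP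
  simp [conicExps, monomial_monExp] at e1 e2 e3
  simp [conicExps, monomial_monExp, e1, e2, e3, -mul_eq_zero] at e4 e5 hP
  have h110 : coeff (monExp 1 1 0) H = 0 := by simpa [ha0] using e5
  have h011 : coeff (monExp 0 1 1) H = 0 := by
    have : c * (b - 1) * coeff (monExp 0 1 1) H = 0 := by
      linear_combination hP - c * e4 + (c - b) * h110
    simpa [hc0, sub_eq_zero, hb1] using this
  have h101 : coeff (monExp 1 0 1) H = 0 := by linear_combination e4 - h110 - h011
  rw [hrep]
  simp [conicExps, e1, e2, e3, h110, h101, h011]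

theorem cubic_eq_zero (hH : W5cond a b c 3 2 H) (ha0 : a ≠ 0) (hb0 : b ≠ 0) (hc0 : c ≠ 0)
    (hb1 : b ≠ 1) (hbc : b ≠ c) (hy : eval ![1, 0, 0] (pderiv 1 H) = 0)
    (hz : eval ![1, 0, 0] (pderiv 2 H) = 0) : H = 0 := by
  obtain ⟨hhom, hW, -, hd⟩ := hH
  have hrep := hhom.eq_sum_monomial_of_subset cubicExps fun d => mem_cubicExps
  have e1 := hW ![1, 0, 0] (by simp [W5pts])
  have e2 := hW ![0, 1, 0] (by simp [W5pts])
  have e3 := hW ![0, 0, 1] (by simp [W5pts])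
  have e4 := hW ![1, 1, 1] (by simp [W5pts])
  have e5 := hW ![1, a, 0] (by simp [W5pts])
  have d0 := hd le_rfl 0
  have d1 := hd le_rfl 1
  have d2 := hd le_rfl 2
  rw [hrep] at e1 e2 e3 e4 e5 d0 d1 d2 hy hz
  simp [cubicExps, monomial_monExp] at e1 e2 e3 hy hz
  simp [cubicExps, monomial_monExp, e1, e2, e3, hy, hz, -mul_eq_zero] at e5
  have h120 : coeff (monExp 1 2 0) H = 0 := by simpa [ha0] using e5
  simp [cubicExps, monomial_monExp, e1, e2, e3, hy, hz, h120, -mul_eq_zero] at e4 d0 d1 d2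
  -- `e4, d0, d1, d2` form a linear system in the four remaining coefficients whose determinant
  -- is a multiple of `b * c * (b - c) * (b - 1)`.
  have h012 : coeff (monExp 0 1 2) H = 0 := by
    have : 3 * b * c ^ 2 * (b - c) * (b - 1) * coeff (monExp 0 1 2) H = 0 := by
      linear_combination (4 * b * c - b ^ 2 - 2 * c) * d0 + b * (b * c - b ^ 2 + c) * d1 +
        c * (2 * b ^ 2 + c - 2 * b * c) * d2 - 3 * b ^ 2 * c ^ 2 * e4
    simpa [hb0, hc0, sub_eq_zero, hbc, hb1] using this
  have h021 : coeff (monExp 0 2 1) H = 0 := by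
    have : 3 * b ^ 2 * c * coeff (monExp 0 2 1) H = 0 := by
      linear_combination c * d2 - 2 * d0 + b * d1 - 3 * b * c ^ 2 * h012
    simpa [hb0, hc0] using this
  have h111 : coeff (monExp 1 1 1) H = 0 := by
    have : c * coeff (monExp 1 1 1) H = 0 := by
      linear_combination d1 - 2 * b * c * h021 - c ^ 2 * h012
    simpa [hc0] using this
  have h102 : coeff (monExp 1 0 2) H = 0 := by
    have : c ^ 2 * coeff (monExp 1 0 2) H = 0 := by linear_combination d0 - b * c * h111
    simpa [hc0] using this
  rw [hrep]
  simp [cubicExps, e1, e2, e3, hy, hz, h120, h012, h021, h111, h102]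

end W5cond

def lineForm (u v w : ℂ) : MvPolynomial (Fin 3) ℂ := C u * X 0 + C v * X 1 + C w * X 2

lemma isHomogeneous_lineForm (u v w : ℂ) : (lineForm u v w).IsHomogeneous 1 :=
  ((isHomogeneous_C_mul_X u 0).add (isHomogeneous_C_mul_X v 1)).add (isHomogeneous_C_mul_X w 2)

def cubicF (b c : ℂ) : MvPolynomial (Fin 3) ℂ :=
  lineForm 0 0 1 * lineForm b (-1) 0 * lineForm (b - c) (c - 1) (1 - b)

def conicQ (a b c : ℂ) : MvPolynomial (Fin 3) ℂ :=
  lineForm (a * c * (1 - b)) (c * (b - 1)) (a * b * c - b * c - a + b) * X 0 +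
    C (a - b - a * c + c) * X 1 * X 2

def cubicG (a b c : ℂ) : MvPolynomial (Fin 3) ℂ :=
  lineForm 0 c (-b) * conicQ a b c

def yzPartialsAt (p : Fin 3 → ℂ) : MvPolynomial (Fin 3) ℂ →ₗ[ℂ] ℂ × ℂ :=
  ((aeval p).toLinearMap ∘ₗ (pderiv (1 : Fin 3)).toLinearMap).prod
    ((aeval p).toLinearMap ∘ₗ (pderiv (2 : Fin 3)).toLinearMap)

@[simp] lemma yzPartialsAt_apply (p : Fin 3 → ℂ) (H : MvPolynomial (Fin 3) ℂ) :
    yzPartialsAt p H = (eval p (pderiv 1 H), eval p (pderiv 2 H)) := by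
  simp [yzPartialsAt]

section

variable {a b c : ℂ}

lemma cubicF_mem_W5space : cubicF b c ∈ W5space a b c 3 2 := by
  refine ⟨((isHomogeneous_lineForm _ _ _).mul (isHomogeneous_lineForm _ _ _)).mul
    (isHomogeneous_lineForm _ _ _), ?_, ?_, fun _ i => ?_⟩
  · simp [W5pts, cubicF, lineForm]
  · simp [cubicF, lineForm]
  · fin_cases i <;> simp [cubicF, lineForm, -mul_eq_zero] <;> ring

lemma cubicG_mem_W5space : cubicG a b c ∈ W5space a b c 3 2 := by
  have hQ : (conicQ a b c).IsHomogeneous 2 :=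
    ((isHomogeneous_lineForm _ _ _).mul (isHomogeneous_X _ _)).add
      ((isHomogeneous_C_mul_X _ _).mul (isHomogeneous_X _ _))
  refine ⟨(isHomogeneous_lineForm _ _ _).mul hQ, ?_, ?_, fun _ i => ?_⟩
  · simp [W5pts, cubicG, conicQ, lineForm, -mul_eq_zero]
    constructor <;> ring
  · simp [cubicG, lineForm, -mul_eq_zero]
    ring
  · fin_cases i <;> simp [cubicG, conicQ, lineForm, -mul_eq_zero] <;> ring

lemma yzPartialsAt_cubicF : yzPartialsAt ![1, 0, 0] (cubicF b c) = (0, b * (b - c)) := by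
  simp [cubicF, lineForm]
  ring

lemma yzPartialsAt_cubicG :
    yzPartialsAt ![1, 0, 0] (cubicG a b c) = (a * c ^ 2 * (1 - b), - (a * b * c * (1 - b))) := by
  simp [cubicG, conicQ, lineForm]
  constructor <;> ring

lemma linearIndependent_yzPartialsAt_cubicF_cubicG (ha0 : a ≠ 0) (hb0 : b ≠ 0) (hc0 : c ≠ 0)
    (hb1 : b ≠ 1) (hbc : b ≠ c) : LinearIndependent ℂ
      ![yzPartialsAt ![1, 0, 0] (cubicF b c), yzPartialsAt ![1, 0, 0] (cubicG a b c)] := by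
  rw [yzPartialsAt_cubicF, yzPartialsAt_cubicG, LinearIndependent.pair_iff]
  intro s t hst
  rw [Prod.smul_mk, Prod.smul_mk, Prod.mk_add_mk, Prod.mk_eq_zero] at hst
  obtain rfl : t = 0 := by simpa [ha0, hc0, sub_eq_zero, Ne.symm hb1] using hst.1
  simpa [hb0, sub_eq_zero, hbc] using hst.2

end

theorem stmt10_general (a b c : ℂ) (hgen : AlgebraicIndependent ℚ ![a, b, c])
    (ha0 : a ≠ 0) :
    (∀ F : MvPolynomial (Fin 3) ℂ, W5cond a b c 2 1 F → F = 0) ∧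
    (∃ F G : MvPolynomial (Fin 3) ℂ, W5cond a b c 3 2 F ∧ W5cond a b c 3 2 G ∧
      LinearIndependent ℂ ![F, G] ∧
      ∀ H : MvPolynomial (Fin 3) ℂ, W5cond a b c 3 2 H →
        H ∈ Submodule.span ℂ ({F, G} : Set (MvPolynomial (Fin 3) ℂ))) := by
  have hb0 : b ≠ 0 := hgen.ne_zero 1
  have hc0 : c ≠ 0 := hgen.ne_zero 2
  have hbc : b ≠ c := hgen.injective.ne (by decide : (1 : Fin 3) ≠ 2)
  have hb1 : b ≠ 1 := fun h => hgen.transcendental 1 (by simpa [h] using isAlgebraic_one)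
  have hΨ := linearIndependent_yzPartialsAt_cubicF_cubicG ha0 hb0 hc0 hb1 hbc
  refine ⟨fun F hF => hF.conic_eq_zero ha0 hc0 hb1, cubicF b c, cubicG a b c,
    cubicF_mem_W5space, cubicG_mem_W5space, ?_, fun H hH => ?_⟩
  · exact LinearIndependent.of_comp _ (by convert hΨ; funext i; fin_cases i <;> rfl)
  · refine Submodule.le_span_pair_of_linearIndependent_map (by simp) (fun K hK hΨK => ?_)
      cubicF_mem_W5space cubicG_mem_W5space hΨ hH
    rw [yzPartialsAt_apply, Prod.mk_eq_zero] at hΨK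
    exact hK.cubic_eq_zero ha0 hb0 hc0 hb1 hbc hΨK.1 hΨK.2

/-- For generic parameters `a, b, c`, the scheme `W₅ + 2P` imposes independent
conditions: `m(1) = 0` (there is no nonzero conic through `W₅` and `P`) and
`m(2) = 2` (the space of cubics through `W₅` singular at `P` has dimension two). -/
theorem stmt10 (a b c : ℂ) (hgen : AlgebraicIndependent ℚ ![a, b, c])
    (ha0 : a ≠ 0) (ha1 : a ≠ 1) :
    (∀ F : MvPolynomial (Fin 3) ℂ, W5cond a b c 2 1 F → F = 0) ∧
    (∃ F G : MvPolynomial (Fin 3) ℂ, W5cond a b c 3 2 F ∧ W5cond a b c 3 2 G ∧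
      LinearIndependent ℂ ![F, G] ∧
      ∀ H : MvPolynomial (Fin 3) ℂ, W5cond a b c 3 2 H →
        H ∈ Submodule.span ℂ ({F, G} : Set (MvPolynomial (Fin 3) ℂ))) :=
  stmt10_general a b c hgen ha0

end
end
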